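/- arXiv:1011.6488 — 10 statements merged into one kernel-verified Lean document; each statement's English description precedes it below -/
import Mathlib

section
/- For all integers l, j, l′, j′ ≥ 0 with l + jm ≤ n and l′ + j′m ≤ n, one has X_{l′,j′} ⊆ X_{l,j} if and only if (n − l − jm) − (n − l′ − j′m) ≥ max(0, (j′ − j)m), i.e. if and only if (l′ + j′m) − (l + jm) ≥ max(0, (j′ − j)m). In particular X_{l′,j′} ⊆ X_{l,j} implies l′ ≥ l. -/
/-! Sufficiency is a chain of three monotonicity steps: forgetting zeros, forgetting blocks, and
regrouping `m` zero coordinates into a new block (its coordinates related by `γ = 1`).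

For necessity, test the inclusion on the point of `X_{l',j'}` whose coordinates are `l'` zeros,
then `m` copies each of `1, …, j'`, then pairwise distinct values above `j'`. Roots of unity have
norm one, so each block of a point of `X_{l,j}` lies in a level set of this point. Having at least
two elements, a block avoids the singleton level sets, so it lies either among the `l'` zero
coordinates or among the `j'm` middle ones; counting gives `l + (j - j')m ≤ l'`. -/

/-- The stratum `X_{l,j} ⊆ ℂ^n`: the set of points having `l` coordinates equal to `0`
and `j` further disjoint collections of `m` coordinates which differ from each other by
`ℓ`-th roots of unity.  (For `l < 0`, `j < 0` or `l + jm > n` the set is empty.) -/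
def Xset (n ℓ m : ℕ) (l j : ℤ) : Set (Fin n → ℂ) :=
  {x | ∃ (Z : Finset (Fin n)) (k : ℕ) (B : Fin k → Finset (Fin n)),
    (Z.card : ℤ) = l ∧ (k : ℤ) = j ∧ (∀ t, (B t).card = m) ∧
    (∀ t, Disjoint Z (B t)) ∧ (∀ t t', t ≠ t' → Disjoint (B t) (B t')) ∧
    (∀ i ∈ Z, x i = 0) ∧
    (∀ t, ∀ i ∈ B t, ∀ i' ∈ B t, ∃ γ : ℂ, γ ^ ℓ = 1 ∧ x i = γ * x i')}

open Finset Function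

section Monotonicity

variable {n ℓ m : ℕ}

theorem Xset_anti_zeros {l l' : ℕ} (j : ℤ) (h : l ≤ l') :
    Xset n ℓ m l' j ⊆ Xset n ℓ m l j := by
  rintro x ⟨Z', k, B, hZ', hk, hB, hZB, hBB, hzero, hrel⟩
  obtain ⟨Z, hZZ', hZ⟩ := exists_subset_card_eq (show l ≤ #Z' by omega)
  exact ⟨Z, k, B, by rw [hZ], hk, hB, fun t => (hZB t).mono_left hZZ', hBB,
    fun i hi => hzero i (hZZ' hi), hrel⟩

theorem Xset_anti_blocks (l : ℤ) {j j' : ℕ} (h : j ≤ j') :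
    Xset n ℓ m l j' ⊆ Xset n ℓ m l j := by
  rintro x ⟨Z, k, B, hZ, hk, hB, hZB, hBB, hzero, hrel⟩
  obtain rfl : k = j' := by exact_mod_cast hk
  exact ⟨Z, j, B ∘ Fin.castLE h, hZ, rfl, fun t => hB _, fun t => hZB _,
    fun t t' htt' => hBB _ _ ((Fin.castLE_injective h).ne htt'), hzero,
    fun t => hrel _⟩

theorem Xset_add_subset_Xset_succ (l : ℕ) (j : ℤ) :
    Xset n ℓ m (l + m : ℕ) j ⊆ Xset n ℓ m l (j + 1) := by
  rintro x ⟨Z', k, B, hZ', hk, hB, hZB, hBB, hzero, hrel⟩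
  obtain ⟨Z, hZZ', hZ⟩ := exists_subset_card_eq (show l ≤ #Z' by omega)
  have hnew : #(Z' \ Z) = m := by rw [card_sdiff_of_subset hZZ']; omega
  refine ⟨Z, k + 1, Fin.snoc B (Z' \ Z), by rw [hZ], by push_cast; rw [hk], ?_, ?_, ?_,
    fun i hi => hzero i (hZZ' hi), ?_⟩
  · intro t
    induction t using Fin.lastCases <;> simp [hB, hnew]
  · intro t
    induction t using Fin.lastCases with
    | last => simpa using disjoint_sdiff
    | cast t => simpa using (hZB t).mono_left hZZ'
  · intro t t' htt'
    induction t using Fin.lastCases <;> induction t' using Fin.lastCases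
    · exact absurd rfl htt'
    · simpa using (hZB _).mono_left sdiff_subset
    · simpa using ((hZB _).mono_left sdiff_subset).symm
    · simpa using hBB _ _ (by simpa using htt')
  · intro t
    induction t using Fin.lastCases with
    | last =>
      intro i hi i' hi'
      simp only [Fin.snoc_last, mem_sdiff] at hi hi'
      exact ⟨1, one_pow ℓ, by rw [hzero i hi.1, hzero i' hi'.1, mul_zero]⟩
    | cast t => simpa using hrel t

theorem Xset_add_mul_subset (l d : ℕ) (j : ℤ) :
    Xset n ℓ m (l + d * m : ℕ) j ⊆ Xset n ℓ m l (j + d) := by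
  induction d generalizing l with
  | zero => simp
  | succ d ih =>
    calc Xset n ℓ m (l + (d + 1) * m : ℕ) j
        ⊆ Xset n ℓ m (l + m : ℕ) (j + d) := by
          rw [show l + (d + 1) * m = l + m + d * m by ring]; exact ih _
      _ ⊆ Xset n ℓ m l (j + (d + 1 : ℕ)) := by
          push_cast; rw [← add_assoc]; exact Xset_add_subset_Xset_succ l _

theorem Xset_subset_Xset_of_le {l j l' j' : ℕ} (h : l + (j - j') * m ≤ l') :
    Xset n ℓ m l' j' ⊆ Xset n ℓ m l j :=
  calc Xset n ℓ m l' j'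
      ⊆ Xset n ℓ m (l + (j - j') * m : ℕ) j' := Xset_anti_zeros _ h
    _ ⊆ Xset n ℓ m l (j' + (j - j' : ℕ)) := Xset_add_mul_subset _ _ _
    _ ⊆ Xset n ℓ m l j := Xset_anti_blocks _ (by omega)

end Monotonicity

theorem exists_card_add_mul_le_of_blocks {α : Type*} [DecidableEq α] {m k : ℕ}
    {Z R₀ R₁ : Finset α} {B : Fin k → Finset α} (hB : ∀ t, #(B t) = m)
    (hZB : ∀ t, Disjoint Z (B t)) (hBB : Pairwise (Disjoint on B)) (hZ : Z ⊆ R₀)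
    (hR : ∀ t, B t ⊆ R₀ ∨ B t ⊆ R₁) :
    ∃ a, #Z + a * m ≤ #R₀ ∧ (k - a) * m ≤ #R₁ := by
  have hcard (s : Finset (Fin k)) : #(s.biUnion B) = #s * m := by
    rw [card_biUnion (hBB.set_pairwise _), sum_const_nat fun t _ => hB t]
  set A := univ.filter fun t => B t ⊆ R₀
  refine ⟨#A, ?_, ?_⟩
  · calc #Z + #A * m = #(Z ∪ A.biUnion B) := by
          rw [card_union_of_disjoint ((disjoint_biUnion_right _ _ _).2 fun t _ => hZB t), hcard]
      _ ≤ #R₀ := card_le_card <| union_subset hZ <|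
          biUnion_subset.2 fun t ht => (mem_filter.1 ht).2
  · calc (k - #A) * m = #(Aᶜ.biUnion B) := by rw [hcard, card_compl, Fintype.card_fin]
      _ ≤ #R₁ := card_le_card <| biUnion_subset.2 fun t ht =>
          (hR t).resolve_left fun h => mem_compl.1 ht (mem_filter.2 ⟨mem_univ t, h⟩)

theorem card_filter_val_mem_le {n : ℕ} (s : Finset ℕ) :
    #(univ.filter fun i : Fin n => (i : ℕ) ∈ s) ≤ #s :=
  card_le_card_of_injOn Fin.val (fun _ hi => (mem_filter.1 hi).2) Fin.val_injective.injOn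

theorem natCast_eq_of_eq_mul_root {ℓ : ℕ} (hℓ : ℓ ≠ 0) {a b : ℕ} {γ : ℂ}
    (hγ : γ ^ ℓ = 1) (h : (a : ℂ) = γ * b) : a = b := by
  have := congrArg norm h
  rw [norm_mul, Complex.norm_eq_one_of_pow_eq_one hγ hℓ, one_mul] at this
  exact_mod_cast this

section Witness

def level (l j m i : ℕ) : ℕ :=
  if i < l then 0 else if i < l + j * m then (i - l) / m + 1 else j + 1 + i

variable {l j m : ℕ}

theorem level_eq_zero_iff {i : ℕ} : level l j m i = 0 ↔ i < l := by
  unfold level; split_ifs <;> grind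

theorem lt_of_level_eq_level {i i' : ℕ} (hii' : i ≠ i') (h : level l j m i = level l j m i')
    (h₀ : level l j m i ≠ 0) : i < l + j * m := by
  by_contra hi
  have hmid (h₁ : l ≤ i') (h₂ : i' < l + j * m) : (i' - l) / m < j :=
    Nat.div_lt_of_lt_mul (by rw [Nat.mul_comm]; omega)
  simp only [level] at h h₀
  split_ifs at h h₀ <;> omega

theorem level_eq_of_mem_Ico {s i : ℕ} (hs : s < j)
    (hi : i ∈ Ico (l + s * m) (l + s * m + m)) : level l j m i = s + 1 := by
  rw [mem_Ico] at hi
  have : s * m + m ≤ j * m := by rw [← Nat.succ_mul]; exact Nat.mul_le_mul_right m hs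
  simp only [level]
  rw [if_neg (by omega), if_pos (by omega), Nat.div_eq_of_lt_le (k := s) (by omega)
    (by rw [Nat.succ_mul]; omega)]

theorem level_mem_Xset {n : ℕ} (ℓ : ℕ) (h : l + j * m ≤ n) :
    (fun i : Fin n => (level l j m i : ℂ)) ∈ Xset n ℓ m l j := by
  have hblock (s : Fin j) : s * m + m ≤ j * m := by
    rw [← Nat.succ_mul]; exact Nat.mul_le_mul_right m s.isLt
  have hZ (i) (hi : i ∈ range l) : i < n := by rw [mem_range] at hi; omega
  have hB (s : Fin j) (i) (hi : i ∈ Ico (l + s * m) (l + s * m + m)) : i < n := by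
    rw [mem_Ico] at hi; have := hblock s; omega
  refine ⟨(range l).attachFin hZ, j, fun s => (Ico (l + s * m) (l + s * m + m)).attachFin (hB s),
    by simp, rfl, fun s => by simp, ?_, ?_, ?_, ?_⟩
  · intro s
    simp only [disjoint_left, mem_attachFin, mem_range, mem_Ico]
    omega
  · intro s s' hss'
    have hss' : (s : ℕ) ≠ s' := Fin.val_ne_of_ne hss'
    have := hblock s; have := hblock s'
    simp only [disjoint_left, mem_attachFin, mem_Ico]
    intro i hi hi'
    rcases Nat.lt_or_gt_of_ne hss' with hlt | hlt
    all_goals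
      have := Nat.mul_le_mul_right m (Nat.succ_le_of_lt hlt)
      rw [Nat.succ_mul] at this
      omega
  · intro i hi
    rw [mem_attachFin, mem_range] at hi
    simp [level_eq_zero_iff.2 hi]
  · intro s i hi i' hi'
    rw [mem_attachFin] at hi hi'
    exact ⟨1, one_pow ℓ, by
      simp only [level_eq_of_mem_Ico s.isLt hi, level_eq_of_mem_Ico s.isLt hi', one_mul]⟩

end Witness

theorem le_of_level_mem_Xset {n ℓ m l j l' j' : ℕ} (hℓ : ℓ ≠ 0) (hm : 2 ≤ m)
    (hx : (fun i : Fin n => (level l' j' m i : ℂ)) ∈ Xset n ℓ m l j) :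
    l + (j - j') * m ≤ l' := by
  obtain ⟨Z, k, B, hZ, hk, hB, hZB, hBB, hzero, hrel⟩ := hx
  obtain rfl : j = k := by exact_mod_cast hk.symm
  have hconst (t) (i) (hi : i ∈ B t) (i') (hi' : i' ∈ B t) :
      level l' j' m i = level l' j' m i' := by
    obtain ⟨γ, hγ, h⟩ := hrel t i hi i' hi'
    exact natCast_eq_of_eq_mul_root hℓ hγ h
  set R₀ := univ.filter fun i : Fin n => (i : ℕ) ∈ range l'
  set R₁ := univ.filter fun i : Fin n => (i : ℕ) ∈ Ico l' (l' + j' * m)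
  have hZR : Z ⊆ R₀ := fun i hi => by
    simpa [R₀, level_eq_zero_iff] using hzero i hi
  have hBR (t) : B t ⊆ R₀ ∨ B t ⊆ R₁ := by
    obtain ⟨i₀, hi₀⟩ : (B t).Nonempty := card_pos.1 (by rw [hB]; omega)
    by_cases h₀ : level l' j' m i₀ = 0
    · left
      intro i hi
      simp only [R₀, mem_filter, mem_univ, mem_range, true_and]
      exact level_eq_zero_iff.1 (hconst t i hi i₀ hi₀ ▸ h₀)
    · right
      intro i hi
      obtain ⟨i', hi', hne⟩ := exists_mem_ne (by rw [hB]; omega : 1 < #(B t)) i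
      have h₀ : level l' j' m i ≠ 0 := hconst t i hi i₀ hi₀ ▸ h₀
      simp only [R₁, mem_filter, mem_univ, mem_Ico, true_and]
      exact ⟨not_lt.1 (mt level_eq_zero_iff.2 h₀),
        lt_of_level_eq_level (Fin.val_ne_of_ne hne.symm) (hconst t i hi i' hi') h₀⟩
  obtain ⟨a, ha₀, ha₁⟩ := exists_card_add_mul_le_of_blocks hB hZB hBB hZR hBR
  have hR₀ : #R₀ ≤ l' := (card_filter_val_mem_le _).trans (card_range _).le
  have hR₁ : #R₁ ≤ j' * m := (card_filter_val_mem_le _).trans (by simp)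
  have : j - a ≤ j' := Nat.le_of_mul_le_mul_right (ha₁.trans hR₁) (by omega)
  have : (j - j') * m ≤ a * m := Nat.mul_le_mul_right _ (by omega)
  omega

theorem Xset_subset_Xset_iff {n ℓ m l j l' j' : ℕ} (hℓ : ℓ ≠ 0) (hm : 2 ≤ m)
    (h : l' + j' * m ≤ n) :
    Xset n ℓ m l' j' ⊆ Xset n ℓ m l j ↔ l + (j - j') * m ≤ l' :=
  ⟨fun hsub => le_of_level_mem_Xset hℓ hm (hsub (level_mem_Xset ℓ h)),
    Xset_subset_Xset_of_le⟩

theorem add_tsub_mul_le_iff_max_le_sub {l j l' j' m : ℕ} :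
    l + (j - j') * m ≤ l' ↔
      max 0 (((j' : ℤ) - j) * m) ≤ (l' + j' * m) - (l + j * m : ℤ) := by
  rcases le_total j j' with h | h <;> obtain ⟨d, rfl⟩ := Nat.exists_eq_add_of_le h
  · simp only [Nat.sub_eq_zero_of_le h, Nat.cast_add, add_sub_cancel_left, zero_mul, add_zero]
    rw [max_eq_right (by positivity)]
    constructor <;> intro <;> linarith
  · simp only [add_tsub_cancel_left, Nat.cast_add, sub_add_cancel_left, neg_mul]
    rw [max_eq_left (by simp; positivity)]
    constructor <;> intro <;> linarith

theorem statement_1_general (n ℓ m : ℕ) (hℓ : 2 ≤ ℓ) (hm : 2 ≤ m)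
    (l j l' j' : ℤ) (hl : 0 ≤ l) (hj : 0 ≤ j) (hl' : 0 ≤ l') (hj' : 0 ≤ j')
    (hlj' : l' + j' * m ≤ n) :
    (Xset n ℓ m l' j' ⊆ Xset n ℓ m l j ↔
      max 0 ((j' - j) * m) ≤ (l' + j' * m) - (l + j * m)) ∧
    (Xset n ℓ m l' j' ⊆ Xset n ℓ m l j → l ≤ l') := by
  lift l to ℕ using hl
  lift j to ℕ using hj
  lift l' to ℕ using hl'
  lift j' to ℕ using hj'
  have hsub : Xset n ℓ m l' j' ⊆ Xset n ℓ m l j ↔ l + (j - j') * m ≤ l' :=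
    Xset_subset_Xset_iff (by omega) hm (by exact_mod_cast hlj')
  exact ⟨hsub.trans add_tsub_mul_le_iff_max_le_sub,
    fun h => by exact_mod_cast (Nat.le_add_right _ _).trans (hsub.1 h)⟩

theorem statement_1 (n ℓ m : ℕ) (hn : 1 ≤ n) (hℓ : 2 ≤ ℓ) (hm : 2 ≤ m)
    (l j l' j' : ℤ) (hl : 0 ≤ l) (hj : 0 ≤ j) (hl' : 0 ≤ l') (hj' : 0 ≤ j')
    (hlj : l + j * m ≤ n) (hlj' : l' + j' * m ≤ n) :
    (Xset n ℓ m l' j' ⊆ Xset n ℓ m l j ↔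
      max 0 ((j' - j) * m) ≤ (l' + j' * m) - (l + j * m)) ∧
    (Xset n ℓ m l' j' ⊆ Xset n ℓ m l j → l ≤ l') :=
  statement_1_general n ℓ m hℓ hm l j l' j' hl hj hl' hj' hlj'
end

section
/- For all integers l, j, l′, j′ ≥ 0 with l + jm ≤ n and l′ + j′m ≤ n, the strict inclusion X_{l′,j′} ⊊ X_{l,j} holds if and only if X_{l′,j′} ⊆ X_{l+1,j} ∪ X_{l,j+1} ∪ X_{l+m,j−1} (where any of the three sets whose parameters are out of range is empty). -/
namespace Xset

variable {n ℓ m : ℕ}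

theorem mem_natCast_iff {a b : ℕ} {x : Fin n → ℂ} :
    x ∈ Xset n ℓ m a b ↔ ∃ (Z : Finset (Fin n)) (B : Fin b → Finset (Fin n)),
      Z.card = a ∧ (∀ t, (B t).card = m) ∧
      (∀ t, Disjoint Z (B t)) ∧ (∀ t t', t ≠ t' → Disjoint (B t) (B t')) ∧
      (∀ i ∈ Z, x i = 0) ∧
      (∀ t, ∀ i ∈ B t, ∀ i' ∈ B t, ∃ γ : ℂ, γ ^ ℓ = 1 ∧ x i = γ * x i') := by
  constructor
  · rintro ⟨Z, k, B, hZ, hk, h⟩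
    obtain rfl : k = b := by exact_mod_cast hk
    exact ⟨Z, B, by exact_mod_cast hZ, h⟩
  · rintro ⟨Z, B, hZ, h⟩
    exact ⟨Z, b, B, by exact_mod_cast hZ, rfl, h⟩

theorem eq_empty_of_neg {a b : ℤ} (h : a < 0 ∨ b < 0) : Xset n ℓ m a b = ∅ := by
  refine Set.eq_empty_of_forall_notMem fun x ⟨Z, k, B, hZ, hk, _⟩ => ?_
  omega

theorem subset_of_le_of_le {a b c d : ℕ} (hc : c ≤ a) (hd : d ≤ b) :
    Xset n ℓ m a b ⊆ Xset n ℓ m c d := by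
  intro x hx
  obtain ⟨Z, B, hZ, hB, hZB, hBB, hz, hr⟩ := mem_natCast_iff.mp hx
  obtain ⟨Z', hZ'Z, hZ'⟩ := Finset.exists_subset_card_eq (hZ ▸ hc)
  exact mem_natCast_iff.mpr ⟨Z', fun t => B (Fin.castLE hd t), hZ', fun t => hB _,
    fun t => (hZB _).mono_left hZ'Z,
    fun t t' htt => hBB _ _ ((Fin.castLE_injective hd).ne htt),
    fun i hi => hz i (hZ'Z hi), fun t => hr _⟩

theorem add_subset_succ (a b : ℕ) :
    Xset n ℓ m ↑(a + m) b ⊆ Xset n ℓ m a ↑(b + 1) := by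
  intro x hx
  obtain ⟨Z, B, hZ, hB, hZB, hBB, hz, hr⟩ := mem_natCast_iff.mp hx
  obtain ⟨Z', hZ'Z, hZ'⟩ := Finset.exists_subset_card_eq (s := Z) (n := a) (by omega)
  have hW : (Z \ Z').card = m := by rw [Finset.card_sdiff_of_subset hZ'Z]; omega
  have hWZ : Z \ Z' ⊆ Z := Finset.sdiff_subset
  obtain ⟨B', hB'last, hB'cast⟩ : ∃ B' : Fin (b + 1) → Finset (Fin n),
      B' (Fin.last b) = Z \ Z' ∧ ∀ t, B' t.castSucc = B t :=
    ⟨Fin.snoc B (Z \ Z'), by simp, by simp⟩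
  have hcard : ∀ t, (B' t).card = m :=
    Fin.lastCases (by rw [hB'last, hW]) (by simpa [hB'cast] using hB)
  have hdisjZ : ∀ t, Disjoint Z' (B' t) :=
    Fin.lastCases (by simpa [hB'last] using Finset.disjoint_sdiff)
      (by simpa [hB'cast] using fun t => (hZB t).mono_left hZ'Z)
  have hdisj : ∀ t t', t ≠ t' → Disjoint (B' t) (B' t') := by
    intro t t' htt
    rcases Fin.eq_castSucc_or_eq_last t with ⟨u, rfl⟩ | rfl <;>
      rcases Fin.eq_castSucc_or_eq_last t' with ⟨u', rfl⟩ | rfl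
    · simpa [hB'cast] using hBB u u' (fun h => htt (h ▸ rfl))
    · simpa [hB'cast, hB'last] using ((hZB u).mono_left hWZ).symm
    · simpa [hB'cast, hB'last] using (hZB u').mono_left hWZ
    · exact absurd rfl htt
  have hroot : ∀ t, ∀ i ∈ B' t, ∀ i' ∈ B' t, ∃ γ : ℂ, γ ^ ℓ = 1 ∧ x i = γ * x i' :=
    Fin.lastCases
      (by
        simp only [hB'last]
        exact fun i hi i' hi' => ⟨1, one_pow ℓ, by rw [hz i (hWZ hi), hz i' (hWZ hi'), mul_zero]⟩)
      (by simpa [hB'cast] using hr)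
  exact mem_natCast_iff.mpr
    ⟨Z', B', hZ', hcard, hdisjZ, hdisj, fun i hi => hz i (hZ'Z hi), hroot⟩

theorem subset_of_add_mul_le {a b c d s : ℕ} (hc : c + s * m ≤ a) (hd : d ≤ b + s) :
    Xset n ℓ m a b ⊆ Xset n ℓ m c d := by
  induction s generalizing a b with
  | zero => exact subset_of_le_of_le (by simpa using hc) hd
  | succ s ih =>
    have ha : a - m + m = a := Nat.sub_add_cancel (by nlinarith)
    calc Xset n ℓ m a b = Xset n ℓ m ↑(a - m + m) b := by rw [ha]
      _ ⊆ Xset n ℓ m ↑(a - m) ↑(b + 1) := add_subset_succ _ _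
      _ ⊆ Xset n ℓ m c d := ih (by rw [Nat.add_one_mul] at hc; omega) (by omega)

/-- The condition for `X_{a,b} ⊆ X_{c,d}` (see `subset_iff_specializes`): after merging `s`
groups of `m` zeros into blocks, `(a, b)` dominates `(c, d)` componentwise. -/
def Specializes (m : ℕ) (a b c d : ℤ) : Prop :=
  0 ≤ c ∧ 0 ≤ d ∧ ∃ s : ℕ, c + s * m ≤ a ∧ d ≤ b + s

theorem subset_of_specializes {a b : ℕ} {c d : ℤ} (h : Specializes m a b c d) :
    Xset n ℓ m a b ⊆ Xset n ℓ m c d := by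
  obtain ⟨hc, hd, s, hcs, hds⟩ := h
  lift c to ℕ using hc
  lift d to ℕ using hd
  exact subset_of_add_mul_le (s := s) (by exact_mod_cast hcs) (by exact_mod_cast hds)

theorem natCast_eq_of_eq_mul_root (hℓ : ℓ ≠ 0) {γ : ℂ} (hγ : γ ^ ℓ = 1) {a b : ℕ}
    (h : (a : ℂ) = γ * b) : a = b := by
  have := congrArg norm h
  rw [norm_mul, Complex.norm_eq_one_of_pow_eq_one hγ hℓ, one_mul] at this
  exact_mod_cast this

theorem card_le_of_forall_val_mem {s : Finset (Fin n)} {t : Finset ℕ} (h : ∀ i ∈ s, i.val ∈ t) :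
    s.card ≤ t.card :=
  Finset.card_le_card_of_injOn _ h Fin.val_injective.injOn

theorem card_biUnion_blocks {b : ℕ} {B : Fin b → Finset (Fin n)} (hB : ∀ t, (B t).card = m)
    (hBB : ∀ t t', t ≠ t' → Disjoint (B t) (B t')) (S : Finset (Fin b)) :
    (S.biUnion B).card = S.card * m := by
  rw [Finset.card_biUnion fun t _ t' _ h => hBB t t' h, Finset.sum_congr rfl fun t _ => hB t,
    Finset.sum_const, smul_eq_mul]

/-- The generic point of `X_{l,j}` is `genericPoint n l (j * m)`: it is `0` on the first `l`
coordinates, `1` on the next `j * m`, and takes pairwise distinct values `≥ 2` on the rest. -/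
def genericLevel (l r i : ℕ) : ℕ :=
  if i < l then 0 else if i < l + r then 1 else i + 2

def genericPoint (n l r : ℕ) : Fin n → ℂ := fun i => genericLevel l r i

theorem genericLevel_eq_zero_iff {l r i : ℕ} : genericLevel l r i = 0 ↔ i < l := by
  unfold genericLevel
  split_ifs <;> simp <;> omega

theorem eq_of_genericLevel_eq {l r i i' : ℕ} (hi : l + r ≤ i)
    (h : genericLevel l r i' = genericLevel l r i) : i' = i := by
  unfold genericLevel at h
  split_ifs at h <;> omega

/-- Levels `≥ 2` are attained only once, so they cannot fill a block. -/
theorem mem_Ico_of_genericLevel_const {l r : ℕ} {D : Finset (Fin n)} (hD : 2 ≤ D.card)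
    (hconst : ∀ i ∈ D, ∀ i' ∈ D, genericLevel l r i = genericLevel l r i')
    {i₀ : Fin n} (hi₀ : i₀ ∈ D) (hli₀ : l ≤ i₀.val) : ∀ i ∈ D, l ≤ i.val ∧ i.val < l + r := by
  intro i hi
  have hl : l ≤ i.val := by
    by_contra! hil
    have := hconst i hi i₀ hi₀
    rw [genericLevel_eq_zero_iff.mpr hil, eq_comm, genericLevel_eq_zero_iff] at this
    omega
  refine ⟨hl, ?_⟩
  by_contra! hir
  have hD1 : D.card ≤ 1 := Finset.card_le_one.mpr fun a ha a' ha' =>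
    Fin.ext <| (eq_of_genericLevel_eq hir (hconst a ha i hi)).trans
      (eq_of_genericLevel_eq hir (hconst a' ha' i hi)).symm
  omega

theorem genericPoint_mem {l j : ℕ} (h : l + j * m ≤ n) :
    genericPoint n l (j * m) ∈ Xset n ℓ m l j := by
  have hZ : ∀ i ∈ Finset.range l, i < n := fun i hi => by simp at hi; omega
  have hB : ∀ t : Fin j, ∀ i ∈ Finset.Ico (l + t * m) (l + t * m + m), i < l + j * m :=
    fun t i hi => by
      have : (t.val + 1) * m ≤ j * m := Nat.mul_le_mul_right m t.isLt
      simp only [Finset.mem_Ico] at hi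
      rw [Nat.add_one_mul] at this
      omega
  refine mem_natCast_iff.mpr ⟨(Finset.range l).attachFin hZ,
    fun t => (Finset.Ico (l + t * m) (l + t * m + m)).attachFin fun i hi => (hB t i hi).trans_le h,
    by simp, fun t => by simp, fun t => ?_, fun t t' htt => ?_, fun i hi => ?_,
    fun t i hi i' hi' => ⟨1, one_pow ℓ, ?_⟩⟩
  · rw [Finset.disjoint_left]
    simp only [Finset.mem_attachFin, Finset.mem_range, Finset.mem_Ico]
    omega
  · wlog hlt : t < t' generalizing t t'
    · exact (this t' t htt.symm (lt_of_le_of_ne (not_lt.mp hlt) htt.symm)).symm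
    have : (t.val + 1) * m ≤ t'.val * m := Nat.mul_le_mul_right m hlt
    rw [Finset.disjoint_left]
    simp only [Finset.mem_attachFin, Finset.mem_Ico]
    rw [Nat.add_one_mul] at this
    omega
  · simp only [Finset.mem_attachFin, Finset.mem_range] at hi
    simp [genericPoint, genericLevel, hi]
  · have hi1 := hB t _ (Finset.mem_attachFin _ |>.mp hi)
    have hi'1 := hB t _ (Finset.mem_attachFin _ |>.mp hi')
    simp only [Finset.mem_attachFin, Finset.mem_Ico] at hi hi'
    simp only [genericPoint, genericLevel]
    rw [if_neg (by omega), if_pos hi1, if_neg (by omega), if_pos hi'1, one_mul]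

/-- In a witness of this membership, `s` blocks lie among the zero coordinates and the other
`t` among the coordinates equal to `1`. -/
theorem exists_of_genericPoint_mem (hℓ : ℓ ≠ 0) (hm : 2 ≤ m) {l r a b : ℕ}
    (hx : genericPoint n l r ∈ Xset n ℓ m a b) :
    ∃ s t, s + t = b ∧ a + s * m ≤ l ∧ t * m ≤ r := by
  classical
  obtain ⟨Z, B, hZ, hB, hZB, hBB, hz, hroot⟩ := mem_natCast_iff.mp hx
  have hconst : ∀ t, ∀ i ∈ B t, ∀ i' ∈ B t, genericLevel l r i = genericLevel l r i' :=
    fun t i hi i' hi' =>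
      let ⟨_, hγ, h⟩ := hroot t i hi i' hi'
      natCast_eq_of_eq_mul_root hℓ hγ h
  let S := Finset.univ.filter fun t => ∀ i ∈ B t, i.val < l
  refine ⟨S.card, Sᶜ.card, by rw [S.card_add_card_compl, Fintype.card_fin], ?_, ?_⟩
  · have hdisj : Disjoint Z (S.biUnion B) :=
      (Finset.disjoint_biUnion_right _ _ _).mpr fun t _ => hZB t
    calc a + S.card * m = (Z ∪ S.biUnion B).card := by
          rw [Finset.card_union_of_disjoint hdisj, hZ, card_biUnion_blocks hB hBB]
      _ ≤ (Finset.range l).card := card_le_of_forall_val_mem fun i hi => by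
          rw [Finset.mem_range]
          rcases Finset.mem_union.mp hi with hi | hi
          · exact genericLevel_eq_zero_iff.mp (Nat.cast_eq_zero.mp (hz i hi))
          · obtain ⟨t, ht, hit⟩ := Finset.mem_biUnion.mp hi
            exact (Finset.mem_filter.mp ht).2 i hit
      _ = l := Finset.card_range l
  · calc Sᶜ.card * m = (Sᶜ.biUnion B).card := (card_biUnion_blocks hB hBB _).symm
      _ ≤ (Finset.Ico l (l + r)).card := card_le_of_forall_val_mem fun i hi => by
          obtain ⟨t, ht, hit⟩ := Finset.mem_biUnion.mp hi
          obtain ⟨i₀, hi₀, hli₀⟩ : ∃ i₀ ∈ B t, l ≤ i₀.val := by simpa [S] using ht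
          exact Finset.mem_Ico.mpr
            (mem_Ico_of_genericLevel_const (hB t ▸ hm) (hconst t) hi₀ hli₀ i hit)
      _ = r := by simp

theorem genericPoint_mem_iff (hℓ : ℓ ≠ 0) (hm : 2 ≤ m) {l j : ℕ} (h : l + j * m ≤ n)
    {c d : ℤ} : genericPoint n l (j * m) ∈ Xset n ℓ m c d ↔ Specializes m l j c d := by
  refine ⟨fun hx => ?_, fun hs => subset_of_specializes hs (genericPoint_mem h)⟩
  by_cases hcd : 0 ≤ c ∧ 0 ≤ d
  · obtain ⟨hc, hd⟩ := hcd
    lift c to ℕ using hc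
    lift d to ℕ using hd
    obtain ⟨s, t, rfl, hcs, htm⟩ := exists_of_genericPoint_mem hℓ hm hx
    have htj : t ≤ j := Nat.le_of_mul_le_mul_right htm (by omega)
    exact ⟨by positivity, by positivity, s, by exact_mod_cast hcs, by push_cast; omega⟩
  · rw [eq_empty_of_neg (by omega)] at hx
    exact hx.elim

theorem subset_iff_specializes (hℓ : ℓ ≠ 0) (hm : 2 ≤ m) {l j : ℕ} (h : l + j * m ≤ n) {c d : ℤ} :
    Xset n ℓ m l j ⊆ Xset n ℓ m c d ↔ Specializes m l j c d :=
  ⟨fun hsub => (genericPoint_mem_iff hℓ hm h).mp (hsub (genericPoint_mem h)),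
    subset_of_specializes⟩

theorem subset_of_genericPoint_mem (hℓ : ℓ ≠ 0) (hm : 2 ≤ m) {l j : ℕ} (h : l + j * m ≤ n)
    {c d : ℤ} (hx : genericPoint n l (j * m) ∈ Xset n ℓ m c d) :
    Xset n ℓ m l j ⊆ Xset n ℓ m c d :=
  subset_of_specializes ((genericPoint_mem_iff hℓ hm h).mp hx)

/-- `(c + 1, d)`, `(c, d + 1)` and `(c + m, d - 1)` are the covers of `(c, d)` in the order
`Specializes m`. -/
theorem specializes_and_not_specializes_iff (hm : 1 ≤ m) {a b c d : ℕ} :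
    Specializes m a b c d ∧ ¬Specializes m c d a b ↔
      (Specializes m a b (c + 1) d ∨ Specializes m a b c (d + 1)) ∨
        Specializes m a b (c + m) (d - 1) := by
  have hmul : ∀ s : ℕ, (s : ℤ) ≤ s * m := fun s => by exact_mod_cast Nat.le_mul_of_pos_right s hm
  have hsucc : ∀ s : ℕ, ((s + 1 : ℕ) : ℤ) * m = s * m + m := fun s => by push_cast; ring
  simp only [Specializes]
  constructor
  · rintro ⟨⟨-, -, s, hcs, hds⟩, hnot⟩
    rcases hcs.lt_or_eq with hcs | hcs
    · exact .inl (.inl ⟨by positivity, by positivity, s, by omega, hds⟩)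
    rcases hds.lt_or_eq with hds | hds
    · exact .inl (.inr ⟨by positivity, by positivity, s, hcs.le, by omega⟩)
    cases s with
    | zero => exact absurd ⟨by positivity, by positivity, 0, by omega, by omega⟩ hnot
    | succ s =>
      have := hsucc s
      exact .inr ⟨by positivity, by omega, s, by omega, by omega⟩
  · rintro ((⟨-, -, s, hcs, hds⟩ | ⟨-, -, s, hcs, hds⟩) | ⟨-, -, s, hcs, hds⟩) <;>
      refine ⟨?_, fun ⟨_, _, t, hat, hbt⟩ => ?_⟩
    · exact ⟨by positivity, by positivity, s, by omega, hds⟩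
    · have := hmul s; have := hmul t; omega
    · exact ⟨by positivity, by positivity, s, hcs, by omega⟩
    · have := hmul s; have := hmul t; omega
    · have := hsucc s
      exact ⟨by positivity, by positivity, s + 1, by omega, by push_cast; omega⟩
    · have := hmul s; have := hmul t; omega

end Xset

theorem statement_2_general (n ℓ m : ℕ) (hℓ : 2 ≤ ℓ) (hm : 2 ≤ m)
    (l j l' j' : ℤ) (hl : 0 ≤ l) (hj : 0 ≤ j) (hl' : 0 ≤ l') (hj' : 0 ≤ j')
    (hlj : l + j * m ≤ n) (hlj' : l' + j' * m ≤ n) :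
    Xset n ℓ m l' j' ⊂ Xset n ℓ m l j ↔
      Xset n ℓ m l' j' ⊆
        Xset n ℓ m (l + 1) j ∪ Xset n ℓ m l (j + 1) ∪ Xset n ℓ m (l + m) (j - 1) := by
  lift l to ℕ using hl
  lift j to ℕ using hj
  lift l' to ℕ using hl'
  lift j' to ℕ using hj'
  have hℓ0 : ℓ ≠ 0 := by omega
  have h : l + j * m ≤ n := by exact_mod_cast hlj
  have h' : l' + j' * m ≤ n := by exact_mod_cast hlj'
  have hunion : Xset n ℓ m l' j' ⊆
        Xset n ℓ m (l + 1) j ∪ Xset n ℓ m l (j + 1) ∪ Xset n ℓ m (l + m) (j - 1) ↔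
      Xset.genericPoint n l' (j' * m) ∈
        Xset n ℓ m (l + 1) j ∪ Xset n ℓ m l (j + 1) ∪ Xset n ℓ m (l + m) (j - 1) := by
    refine ⟨fun hsub => hsub (Xset.genericPoint_mem h'), ?_⟩
    rintro ((hx | hx) | hx) <;> have hsub := Xset.subset_of_genericPoint_mem hℓ0 hm h' hx
    · exact hsub.trans (Set.subset_union_left.trans Set.subset_union_left)
    · exact hsub.trans (Set.subset_union_right.trans Set.subset_union_left)
    · exact hsub.trans Set.subset_union_right
  rw [Set.ssubset_def, Xset.subset_iff_specializes hℓ0 hm h',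
    Xset.subset_iff_specializes hℓ0 hm h, hunion]
  simp only [Set.mem_union, Xset.genericPoint_mem_iff hℓ0 hm h']
  exact Xset.specializes_and_not_specializes_iff (by omega)

theorem statement_2 (n ℓ m : ℕ) (hn : 1 ≤ n) (hℓ : 2 ≤ ℓ) (hm : 2 ≤ m)
    (l j l' j' : ℤ) (hl : 0 ≤ l) (hj : 0 ≤ j) (hl' : 0 ≤ l') (hj' : 0 ≤ j')
    (hlj : l + j * m ≤ n) (hlj' : l' + j' * m ≤ n) :
    Xset n ℓ m l' j' ⊂ Xset n ℓ m l j ↔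
      Xset n ℓ m l' j' ⊆
        Xset n ℓ m (l + 1) j ∪ Xset n ℓ m l (j + 1) ∪ Xset n ℓ m (l + m) (j - 1) :=
  statement_2_general n ℓ m hℓ hm l j l' j' hl hj hl' hj' hlj hlj'
end

section
/- For all integers j, j′ ≥ 0 with jm ≤ n and j′m ≤ n: (1) X_{j′} ⊆ X_j if and only if j′ ≥ j; (2) X_{j′} ⊊ X_j if and only if X_{j′} ⊆ X_{j+1} (where X_{j+1} = ∅ if (j+1)m > n). -/
/-! The strata decrease in `j`, so only `X_{j'} ⊆ X_j → j ≤ j'` needs an argument: a point of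
`X_{j'}` outside `X_{j'+1}`. Take the centred "staircase" `x`, equal to `⌊i/m⌋` on the first
`j'm` coordinates and injective with new values on the others. Because `m ≥ 2`, every block of
equal coordinates of `x` lies in the first `j'm` coordinates, so `x` has at most `j'` blocks. -/

/-- The stratum `X_j ⊆ ℂ^n_0 = {x : ∑ x_i = 0}`: the set of points of `ℂ^n_0` having `j`
disjoint collections of `m` equal coordinates.  (For `jm > n` the set is empty.) -/
def Xj (n m j : ℕ) : Set (Fin n → ℂ) :=
  {x | (∑ i, x i) = 0 ∧ ∃ B : Fin j → Finset (Fin n),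
    (∀ t, (B t).card = m) ∧ (∀ t t', t ≠ t' → Disjoint (B t) (B t')) ∧
    (∀ t, ∀ i ∈ B t, ∀ i' ∈ B t, x i = x i')}

open Finset Function
open scoped BigOperators

def HasEqualBlocks {ι α : Type*} (m j : ℕ) (x : ι → α) : Prop :=
  ∃ B : Fin j → Finset ι,
    (∀ t, #(B t) = m) ∧ (∀ t t', t ≠ t' → Disjoint (B t) (B t')) ∧
    ∀ t, ∀ i ∈ B t, ∀ i' ∈ B t, x i = x i'

theorem mem_Xj {n m j : ℕ} {x : Fin n → ℂ} :
    x ∈ Xj n m j ↔ ∑ i, x i = 0 ∧ HasEqualBlocks m j x :=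
  Iff.rfl

namespace HasEqualBlocks

variable {ι α β : Type*} {m j k : ℕ} {x : ι → α}

theorem mono (h : HasEqualBlocks m k x) (hjk : j ≤ k) : HasEqualBlocks m j x := by
  obtain ⟨B, hcard, hdisj, hconst⟩ := h
  exact ⟨B ∘ Fin.castLE hjk, fun t => hcard _,
    fun t t' ht => hdisj _ _ ((Fin.castLE_injective hjk).ne ht), fun t => hconst _⟩

theorem comp (h : HasEqualBlocks m j x) (f : α → β) : HasEqualBlocks m j (f ∘ x) := by
  obtain ⟨B, hcard, hdisj, hconst⟩ := h
  exact ⟨B, hcard, hdisj, fun t i hi i' hi' => congrArg f (hconst t i hi i' hi')⟩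

theorem of_comp {f : α → β} (hf : Injective f) (h : HasEqualBlocks m j (f ∘ x)) :
    HasEqualBlocks m j x := by
  obtain ⟨B, hcard, hdisj, hconst⟩ := h
  exact ⟨B, hcard, hdisj, fun t i hi i' hi' => hf (hconst t i hi i' hi')⟩

theorem mul_le_card_of_subset (h : HasEqualBlocks m j x) (hm : 2 ≤ m) {S : Finset ι}
    (hS : ∀ i i', i ≠ i' → x i = x i' → i ∈ S) : j * m ≤ #S := by
  classical
  obtain ⟨B, hcard, hdisj, hconst⟩ := h
  have hBS : ∀ t, B t ⊆ S := by
    intro t i hi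
    obtain ⟨i', hi', hne⟩ := exists_mem_ne (by rw [hcard t]; omega) i
    exact hS i i' hne.symm (hconst t i hi i' hi')
  calc j * m = ∑ t, #(B t) := by simp [hcard, mul_comm]
    _ = #(univ.biUnion B) := (card_biUnion fun t _ t' _ h => hdisj t t' h).symm
    _ ≤ #S := card_le_card (biUnion_subset.2 fun t _ => hBS t)

end HasEqualBlocks

def stairs (m k i : ℕ) : ℕ := if i < k * m then i / m else i

theorem lt_of_stairs_eq {m k i i' : ℕ} (hne : i ≠ i') (h : stairs m k i = stairs m k i') :
    i < k * m := by
  have := Nat.div_le_self i m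
  have := Nat.div_le_self i' m
  unfold stairs at h
  split_ifs at h <;> omega

theorem hasEqualBlocks_stairs {n m k : ℕ} (hk : k * m ≤ n) :
    HasEqualBlocks m k fun i : Fin n => stairs m k i := by
  have hstep : ∀ t : Fin k, t * m + m ≤ k * m := fun t => by
    simpa [add_mul] using Nat.mul_le_mul_right m t.isLt
  have hdiv : ∀ (t : Fin k) a, a ∈ Ico (t * m) (t * m + m) → a / m = t := fun t a ha => by
    rw [mem_Ico] at ha
    exact Nat.div_eq_of_lt_le ha.1 (by rw [add_mul, one_mul]; exact ha.2)
  have hlt : ∀ (t : Fin k) a, a ∈ Ico (t * m) (t * m + m) → a < k * m := fun t a ha =>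
    (mem_Ico.1 ha).2.trans_le (hstep t)
  refine ⟨fun t => (Ico (t * m) (t * m + m)).attachFin fun a ha => (hlt t a ha).trans_le hk,
    fun t => by simp, fun t t' ht => disjoint_left.2 fun a ha ha' => ht ?_, ?_⟩
  · rw [mem_attachFin] at ha ha'
    exact Fin.ext ((hdiv t a ha).symm.trans (hdiv t' a ha'))
  · intro t a ha a' ha'
    rw [mem_attachFin] at ha ha'
    simp only [stairs, if_pos (hlt t a ha), if_pos (hlt t a' ha'), hdiv t a ha, hdiv t a' ha']

theorem not_hasEqualBlocks_succ_stairs {n m k : ℕ} (hm : 2 ≤ m) (hk : k * m ≤ n) :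
    ¬HasEqualBlocks m (k + 1) fun i : Fin n => stairs m k i := by
  intro h
  have hS : ∀ a ∈ range (k * m), a < n := fun a ha => (mem_range.1 ha).trans_le hk
  have hbound : (k + 1) * m ≤ k * m := by
    simpa using h.mul_le_card_of_subset hm (S := (range (k * m)).attachFin hS) fun i i' hne heq =>
      (mem_attachFin hS).2 (mem_range.2 (lt_of_stairs_eq (Fin.val_ne_of_ne hne) heq))
  exact Nat.not_succ_le_self k (Nat.le_of_mul_le_mul_right hbound (by omega))

theorem exists_mem_Xj_not_mem_Xj_succ {n m k : ℕ} (hm : 2 ≤ m) (hk : k * m ≤ n) :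
    ∃ x ∈ Xj n m k, x ∉ Xj n m (k + 1) := by
  set y : Fin n → ℕ := fun i => stairs m k i
  set c : ℂ := 𝔼 i, (y i : ℂ)
  have hinj : Injective fun a : ℕ => (a : ℂ) - c := fun a b h => by simpa using h
  exact ⟨Fintype.balance fun i => (y i : ℂ),
    ⟨Fintype.sum_balance _, (hasEqualBlocks_stairs hk).comp fun a : ℕ => (a : ℂ) - c⟩,
    fun hx => not_hasEqualBlocks_succ_stairs hm hk (HasEqualBlocks.of_comp hinj (mem_Xj.1 hx).2)⟩

theorem Xj_anti {n m j k : ℕ} (hjk : j ≤ k) : Xj n m k ⊆ Xj n m j :=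
  fun _ hx => ⟨hx.1, HasEqualBlocks.mono hx.2 hjk⟩

theorem Xj_subset_Xj_iff {n m j k : ℕ} (hm : 2 ≤ m) (hk : k * m ≤ n) :
    Xj n m k ⊆ Xj n m j ↔ j ≤ k := by
  refine ⟨fun hsub => ?_, Xj_anti⟩
  by_contra! hkj
  obtain ⟨x, hx, hx'⟩ := exists_mem_Xj_not_mem_Xj_succ hm hk
  exact hx' (Xj_anti hkj (hsub hx))

theorem Xj_ssubset_Xj_iff {n m j k : ℕ} (hm : 2 ≤ m) (hk : k * m ≤ n) :
    Xj n m k ⊂ Xj n m j ↔ j < k := by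
  refine ⟨fun h => ?_, fun hjk => ⟨Xj_anti hjk.le, fun hsub => ?_⟩⟩
  · obtain hjk | rfl := ((Xj_subset_Xj_iff hm hk).1 h.subset).lt_or_eq
    · exact hjk
    · exact absurd h (ssubset_irrefl _)
  · have hj : j * m ≤ n := (Nat.mul_le_mul_right m hjk.le).trans hk
    exact hjk.not_ge ((Xj_subset_Xj_iff hm hj).1 hsub)

theorem statement_3_general (n m : ℕ) (hm : 2 ≤ m)
    (j j' : ℕ) (hj' : j' * m ≤ n) :
    (Xj n m j' ⊆ Xj n m j ↔ j ≤ j') ∧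
    (Xj n m j' ⊂ Xj n m j ↔ Xj n m j' ⊆ Xj n m (j + 1)) := by
  rw [Xj_ssubset_Xj_iff hm hj', Xj_subset_Xj_iff hm hj', Xj_subset_Xj_iff hm hj']
  exact ⟨Iff.rfl, Nat.lt_iff_add_one_le⟩

theorem statement_3 (n m : ℕ) (hn : 1 ≤ n) (hm : 2 ≤ m)
    (j j' : ℕ) (hj : j * m ≤ n) (hj' : j' * m ≤ n) :
    (Xj n m j' ⊆ Xj n m j ↔ j ≤ j') ∧
    (Xj n m j' ⊂ Xj n m j ↔ Xj n m j' ⊆ Xj n m (j + 1)) :=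
  statement_3_general n m hm j j' hj'
end

section
/- Let f be the class function on 𝔖_r defined by f(w) = r if w is an r-cycle and f(w) = 0 otherwise. Then the induced class function Ind_{𝔖_r}^{Γ_r} f is given by: (Ind_{𝔖_r}^{Γ_r} f)(w, (γ_1,…,γ_r)) = rℓ if w is an r-cycle and γ_1γ_2⋯γ_r = 1, and (Ind_{𝔖_r}^{Γ_r} f)(w, (γ_1,…,γ_r)) = 0 otherwise. (Via the characteristic maps, this is the identity Ind_𝔖^Γ(P_r) = Σ_{p ∈ ℤ/ℓ} P_{r,p} on power sums.) -/
/- Statement 5: induction of the class function `w ↦ r·[w is an r-cycle]` from 𝔖_r to the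
wreath product Γ_r = 𝔖_r ⋉ μ_ℓ^r. -/

open scoped Classical

noncomputable section

/-- The permutation automorphism of `Fin r → G` given by `σ`, i.e. `f ↦ f ∘ σ⁻¹`. -/
def permAut (G : Type*) [Group G] (r : ℕ) (σ : Equiv.Perm (Fin r)) : MulAut (Fin r → G) where
  toFun f := f ∘ σ.symm
  invFun f := f ∘ σ
  left_inv f := by funext i; simp
  right_inv f := by funext i; simp
  map_mul' f g := rfl

/-- The action of `𝔖_r` on `G^r` by permutation of the coordinates, as a homomorphism
to the automorphism group. -/
def permHom (G : Type*) [Group G] (r : ℕ) : Equiv.Perm (Fin r) →* MulAut (Fin r → G) where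
  toFun := permAut G r
  map_one' := MulEquiv.ext fun _ => rfl
  map_mul' _ _ := MulEquiv.ext fun _ => rfl

def sdpEquivProd {N G : Type*} [Group N] [Group G] (φ : G →* MulAut N) :
    SemidirectProduct N G φ ≃ N × G where
  toFun x := (x.left, x.right)
  invFun p := ⟨p.1, p.2⟩
  left_inv _ := rfl
  right_inv _ := rfl

instance {N G : Type*} [Group N] [Group G] (φ : G →* MulAut N) [Fintype N] [Fintype G] :
    Fintype (SemidirectProduct N G φ) :=
  Fintype.ofEquiv (N × G) (sdpEquivProd φ).symm

instance (ℓ : ℕ) [NeZero ℓ] : Fintype (rootsOfUnity ℓ ℂ) := Fintype.ofFinite _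

/-- The wreath product `Γ_r = 𝔖_r ⋉ μ_ℓ^r`, where `μ_ℓ ⊆ ℂˣ` is the group of `ℓ`-th
roots of unity. -/
abbrev WreathGamma (ℓ r : ℕ) : Type :=
  (Fin r → rootsOfUnity ℓ ℂ) ⋊[permHom (rootsOfUnity ℓ ℂ) r] Equiv.Perm (Fin r)

/-!
Write `g = (δ, σ)` and `x = (γ, w)`. The element `g x g⁻¹` lies in `𝔖_r` exactly when
`ε := σ⁻¹ · δ` solves the coboundary equation `ε⁻¹ · (w · ε) = γ` in the abelian group `μ_ℓ^r`,
and its `𝔖_r`-component `σ w σ⁻¹` is an `r`-cycle iff `w` is. For an `r`-cycle `w` the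
coboundary map `ε ↦ ε⁻¹ · (w · ε)` has the `ℓ` constant tuples as kernel, so by counting its image
is the kernel of the product map `μ_ℓ^r → μ_ℓ`. Hence each of the `r!` choices of `σ` admits
`ℓ · [γ₁ ⋯ γ_r = 1]` choices of `δ`, each contributing `f = r`, and dividing by `|𝔖_r| = r!` gives
the formula.
-/

namespace MulAut

variable {N : Type*} [CommGroup N]

def coboundary (α : MulAut N) : N →* N where
  toFun ε := ε⁻¹ * α ε
  map_one' := by simp
  map_mul' ε η := by simp only [mul_inv, map_mul]; exact mul_mul_mul_comm _ _ _ _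

theorem coboundary_apply (α : MulAut N) (ε : N) : α.coboundary ε = ε⁻¹ * α ε := rfl

theorem mem_ker_coboundary {α : MulAut N} {ε : N} : ε ∈ α.coboundary.ker ↔ α ε = ε := by
  rw [MonoidHom.mem_ker, coboundary_apply, inv_mul_eq_one, eq_comm]

end MulAut

namespace MonoidHom

variable {A B : Type*} [Group A] [Group B]

theorem card_preimage_singleton (f : A →* B) (b : B) :
    Nat.card (f ⁻¹' {b}) = if b ∈ f.range then Nat.card f.ker else 0 := by
  split_ifs with hb
  · obtain ⟨a, rfl⟩ := hb
    exact Nat.card_congr (f.fiberEquivKer a)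
  · rw [Nat.card_eq_zero]
    exact .inl ⟨fun ⟨a, ha⟩ => hb ⟨a, ha⟩⟩

theorem card_range_mul_card_ker (f : A →* B) :
    Nat.card f.range * Nat.card f.ker = Nat.card A := by
  rw [← Subgroup.index_ker, mul_comm, Subgroup.card_mul_index]

end MonoidHom

theorem Fintype.sum_ite_eq_natCard_mul {α R : Type*} [Fintype α] [NonAssocSemiring R]
    (p : α → Prop) [DecidablePred p] (c : R) :
    ∑ a, (if p a then c else 0) = Nat.card {a // p a} * c := by
  rw [Finset.sum_ite, Finset.sum_const_zero, add_zero, Finset.sum_const, nsmul_eq_mul,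
    Nat.card_eq_fintype_card, Fintype.card_subtype]

def Fintype.prodMonoidHom (ι G : Type*) [Fintype ι] [CommGroup G] : (ι → G) →* G where
  toFun γ := ∏ i, γ i
  map_one' := Finset.prod_const_one
  map_mul' _ _ := Finset.prod_mul_distrib

section PermCoordinates

variable {G : Type*} [CommGroup G] {r : ℕ} {w : Equiv.Perm (Fin r)}

theorem permHom_apply (σ : Equiv.Perm (Fin r)) : permHom G r σ = permAut G r σ := rfl

theorem permAut_apply (σ : Equiv.Perm (Fin r)) (ε : Fin r → G) (i : Fin r) :
    permAut G r σ ε i = ε (σ.symm i) := rfl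

theorem apply_eq_apply_of_permAut_eq (hw : w.IsCycleOn Set.univ) {ε : Fin r → G}
    (hε : permAut G r w ε = ε) (i j : Fin r) : ε i = ε j := by
  have hsemi : Function.Semiconj ε w id := fun k => by
    simpa [permAut_apply] using (congrFun hε (w k)).symm
  obtain ⟨n, rfl⟩ := hw.exists_pow_eq' Set.finite_univ (Set.mem_univ i) (Set.mem_univ j)
  rw [Equiv.Perm.coe_pow, hsemi.iterate_right n i, Function.iterate_id, id]

def kerCoboundaryPermAutEquiv (hr : 0 < r) (hw : w.IsCycleOn Set.univ) :
    (permAut G r w).coboundary.ker ≃ G where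
  toFun ε := ε.1 ⟨0, hr⟩
  invFun c := ⟨fun _ => c, MulAut.mem_ker_coboundary.2 rfl⟩
  left_inv ε := Subtype.ext <| funext fun _ =>
    apply_eq_apply_of_permAut_eq hw (MulAut.mem_ker_coboundary.1 ε.2) _ _
  right_inv _ := rfl

theorem range_coboundary_permAut [Finite G] (hr : 0 < r) (hw : w.IsCycleOn Set.univ) :
    (permAut G r w).coboundary.range = (Fintype.prodMonoidHom (Fin r) G).ker := by
  have hle : (permAut G r w).coboundary.range ≤ (Fintype.prodMonoidHom (Fin r) G).ker := by
    rintro _ ⟨ε, rfl⟩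
    change ∏ i, (ε i)⁻¹ * ε (w.symm i) = 1
    rw [Finset.prod_mul_distrib, Finset.prod_inv_distrib, Equiv.prod_comp, inv_mul_cancel]
  have hprod_range : (Fintype.prodMonoidHom (Fin r) G).range = ⊤ :=
    MonoidHom.range_eq_top_of_surjective _ fun g =>
      ⟨_, Fintype.prod_pi_mulSingle' (⟨0, hr⟩ : Fin r) g⟩
  refine Subgroup.eq_of_le_of_card_ge hle (Nat.le_of_eq ?_)
  apply Nat.eq_of_mul_eq_mul_right (Nat.card_pos (α := G))
  have hcob := (permAut G r w).coboundary.card_range_mul_card_ker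
  have hprod := (Fintype.prodMonoidHom (Fin r) G).card_range_mul_card_ker
  rw [Nat.card_congr (kerCoboundaryPermAutEquiv hr hw)] at hcob
  rw [hprod_range, Subgroup.card_top, mul_comm] at hprod
  rw [hprod, hcob]

theorem card_coboundary_permAut_fiber [Finite G] (hr : 0 < r) (hw : w.IsCycleOn Set.univ)
    (γ : Fin r → G) :
    Nat.card ((permAut G r w).coboundary ⁻¹' {γ}) = if ∏ i, γ i = 1 then Nat.card G else 0 := by
  rw [MonoidHom.card_preimage_singleton, range_coboundary_permAut hr hw,
    Nat.card_congr (kerCoboundaryPermAutEquiv hr hw)]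
  rfl

end PermCoordinates

theorem Equiv.Perm.isCycleOn_univ_conj_iff {α : Type*} (σ w : Equiv.Perm α) :
    (σ * w * σ⁻¹).IsCycleOn .univ ↔ w.IsCycleOn .univ := by
  refine ⟨fun h => ?_, fun h => ?_⟩
  · simpa [mul_assoc] using h.conj (g := σ⁻¹)
  · simpa using h.conj (g := σ)

namespace SemidirectProduct

variable {N G : Type*} [Group G]

theorem mem_range_inr_iff [Group N] {φ : G →* MulAut N} {z : N ⋊[φ] G} :
    z ∈ (inr : G →* N ⋊[φ] G).range ↔ z.left = 1 :=
  ⟨by rintro ⟨g, rfl⟩; rfl, fun h => ⟨z.right, SemidirectProduct.ext h.symm rfl⟩⟩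

variable [CommGroup N] {φ : G →* MulAut N}

theorem conj_left_eq_one_iff (g x : N ⋊[φ] G) :
    (g * x * g⁻¹).left = 1 ↔ (φ x.right).coboundary (φ g.right⁻¹ g.left) = x.left := by
  set ε := φ g.right⁻¹ g.left
  have hε : g.left = φ g.right ε := by simp [ε]
  have hconj : (g * x * g⁻¹).left = φ g.right (ε * x.left * (φ x.right ε)⁻¹) := by
    rw [mul_left, mul_left, inv_left, hε]
    simp
  rw [hconj, MulEquivClass.map_eq_one_iff, MulAut.coboundary_apply, mul_inv_eq_one,
    inv_mul_eq_iff_eq_mul, eq_comm]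

def conjMemRangeInrEquiv (x : N ⋊[φ] G) :
    {g : N ⋊[φ] G // g * x * g⁻¹ ∈ (inr : G →* N ⋊[φ] G).range} ≃
      G × (φ x.right).coboundary ⁻¹' {x.left} where
  toFun g := (g.1.right, ⟨φ g.1.right⁻¹ g.1.left,
    (conj_left_eq_one_iff _ _).1 (mem_range_inr_iff.1 g.2)⟩)
  invFun p := ⟨⟨φ p.1 p.2, p.1⟩, mem_range_inr_iff.2 <| (conj_left_eq_one_iff _ _).2 <| by
    simp only [map_inv, MulAut.inv_apply, MulEquiv.symm_apply_apply]
    exact p.2.2⟩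
  left_inv g := by ext <;> simp
  right_inv p := by ext <;> simp

theorem card_conj_mem_range_inr (x : N ⋊[φ] G) :
    Nat.card {g : N ⋊[φ] G // g * x * g⁻¹ ∈ (inr : G →* N ⋊[φ] G).range} =
      Nat.card G * Nat.card ((φ x.right).coboundary ⁻¹' {x.left}) := by
  rw [Nat.card_congr (conjMemRangeInrEquiv x), Nat.card_prod]

end SemidirectProduct

theorem statement_5 (ℓ r : ℕ) [NeZero ℓ] (hr : 1 ≤ r)
    -- the class function `f` on `𝔖_r`: `f w = r` if `w` is an `r`-cycle, `0` otherwise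
    (f : Equiv.Perm (Fin r) → ℂ)
    (hf : ∀ w : Equiv.Perm (Fin r),
      f w = if w.IsCycleOn (Set.univ : Set (Fin r)) then (r : ℂ) else 0)
    -- `H` is the copy of `𝔖_r` inside `Γ_r`
    (H : Subgroup (WreathGamma ℓ r))
    (hH : H = (SemidirectProduct.inr :
      Equiv.Perm (Fin r) →* WreathGamma ℓ r).range)
    -- the induced class function, defined by the formula
    -- `(Ind f)(x) = |H|⁻¹ · ∑_{g : g x g⁻¹ ∈ H} f (g x g⁻¹)`
    (indf : WreathGamma ℓ r → ℂ)
    (hindf : ∀ x : WreathGamma ℓ r,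
      indf x = (Nat.card H : ℂ)⁻¹ *
        ∑ g : WreathGamma ℓ r,
          if g * x * g⁻¹ ∈ H then f (SemidirectProduct.rightHom (g * x * g⁻¹)) else 0) :
    ∀ x : WreathGamma ℓ r,
      indf x =
        if x.right.IsCycleOn (Set.univ : Set (Fin r)) ∧ (∏ i, x.left i) = 1
        then (r : ℂ) * (ℓ : ℂ) else 0 := by
  intro x
  subst hH
  have hf_conj (g : WreathGamma ℓ r) :
      f (SemidirectProduct.rightHom (g * x * g⁻¹)) = f x.right := by
    simp only [hf, SemidirectProduct.rightHom_eq_right, SemidirectProduct.mul_right,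
      SemidirectProduct.inv_right, Equiv.Perm.isCycleOn_univ_conj_iff]
  have hH_card : Nat.card (SemidirectProduct.inr : Equiv.Perm (Fin r) →* WreathGamma ℓ r).range =
      Nat.card (Equiv.Perm (Fin r)) :=
    Nat.card_congr (MonoidHom.ofInjective SemidirectProduct.inr_injective).toEquiv.symm
  have hperm : (Nat.card (Equiv.Perm (Fin r)) : ℂ) ≠ 0 := Nat.cast_ne_zero.2 Nat.card_pos.ne'
  rw [hindf]
  simp only [hf_conj]
  rw [Fintype.sum_ite_eq_natCard_mul, hH_card, SemidirectProduct.card_conj_mem_range_inr]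
  by_cases hw : x.right.IsCycleOn Set.univ
  · rw [hf, if_pos hw, permHom_apply, card_coboundary_permAut_fiber hr hw,
      Complex.card_rootsOfUnity]
    by_cases hγ : ∏ i, x.left i = 1
    · rw [if_pos hγ, if_pos ⟨hw, hγ⟩]
      push_cast
      field_simp
    · rw [if_neg hγ, if_neg fun h => hγ h.2]
      simp
  · simp [hf, hw]
end
end

section
/- Let τ_i ∈ 𝔖_N be the permutation that exchanges the two consecutive blocks {n+(i−1)m+1,…,n+im} and {n+im+1,…,n+(i+1)m} (adding m to each letter of the first block and subtracting m from each letter of the second) and fixes all other letters. Set a = n+(i−1)m+1, b = n+im, and for 0 ≤ l ≤ m−1 let κ_l = s_{b−l}·s_{b−l+2}·⋯·s_{b+l−2}·s_{b+l} (a product of l+1 pairwise commuting simple transpositions, where s_c denotes the transposition (c, c+1)). Then τ_i = κ_0κ_1⋯κ_{m−2}κ_{m−1}κ_{m−2}⋯κ_1κ_0, and concatenating the factors gives a reduced expression of τ_i; in particular the Coxeter length of τ_i is m². -/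
/-!
Each `κ_l` is a product of disjoint transpositions, hence an involution, so the word evaluates to
`A κ_{m-1} A⁻¹` with `A = κ_0 ⋯ κ_{m-2}`. The prefix `A` unshuffles the window
`[b+1-m, b+m]`: letters at even offset from its left end go to the left half, those at odd
offset to the right half. Since `κ_{m-1}` swaps the neighbouring pairs of that window, the
conjugate exchanges the two halves. For the length, left multiplication by `s_c` creates at most
one new inversion, while `τ_i` inverts all `m²` pairs taken from the first block and the second
block.
-/

namespace BlockSwap

open Equiv Finset

def adjSwap (c : ℕ) : Perm ℕ := swap c (c + 1)

def pairSwaps (c j : ℕ) : Perm ℕ := ((List.range j).map fun t => adjSwap (c + 2 * t)).prod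

lemma pairSwaps_succ (c j : ℕ) : pairSwaps c (j + 1) = adjSwap c * pairSwaps (c + 2) j := by
  simp only [pairSwaps, List.range_succ_eq_map, List.map_cons, List.prod_cons, List.map_map,
    Function.comp_def, mul_zero, add_zero, Nat.succ_eq_add_one, mul_add, add_assoc, mul_one,
    add_comm 2]

lemma pairSwaps_apply_of_lt_or_le {c j x : ℕ} (h : x < c ∨ c + 2 * j ≤ x) :
    pairSwaps c j x = x := by
  induction j generalizing c with
  | zero => rfl
  | succ j ih =>
    rw [pairSwaps_succ, Perm.mul_apply, ih (by omega), adjSwap,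
      swap_apply_of_ne_of_ne (by omega) (by omega)]

lemma pairSwaps_apply_even {c j t : ℕ} (ht : t < j) :
    pairSwaps c j (c + 2 * t) = c + 2 * t + 1 := by
  induction j generalizing c t with
  | zero => omega
  | succ j ih =>
    rw [pairSwaps_succ, Perm.mul_apply, adjSwap]
    rcases t with _ | t
    · rw [pairSwaps_apply_of_lt_or_le (by omega)]
      simp
    · rw [show c + 2 * (t + 1) = c + 2 + 2 * t by ring, ih (by omega),
        swap_apply_of_ne_of_ne (by omega) (by omega)]

lemma pairSwaps_apply_odd {c j t : ℕ} (ht : t < j) :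
    pairSwaps c j (c + 2 * t + 1) = c + 2 * t := by
  induction j generalizing c t with
  | zero => omega
  | succ j ih =>
    rw [pairSwaps_succ, Perm.mul_apply, adjSwap]
    rcases t with _ | t
    · rw [pairSwaps_apply_of_lt_or_le (by omega)]
      simp
    · rw [show c + 2 * (t + 1) = c + 2 + 2 * t by ring, ih (by omega),
        swap_apply_of_ne_of_ne (by omega) (by omega)]

lemma pairSwaps_inv (c j : ℕ) : (pairSwaps c j)⁻¹ = pairSwaps c j := by
  induction j generalizing c with
  | zero => exact inv_one
  | succ j ih =>
    have hcomm : pairSwaps (c + 2) j * adjSwap c = adjSwap c * pairSwaps (c + 2) j := by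
      rw [adjSwap, mul_swap_eq_swap_mul, pairSwaps_apply_of_lt_or_le (by omega),
        pairSwaps_apply_of_lt_or_le (by omega)]
    rw [pairSwaps_succ, mul_inv_rev, ih, adjSwap, swap_inv, ← adjSwap, hcomm]

def kappaWord (b l : ℕ) : List ℕ := (List.range (l + 1)).map fun t => b - l + 2 * t

lemma prod_map_kappaWord (b l : ℕ) :
    ((kappaWord b l).map adjSwap).prod = pairSwaps (b - l) (l + 1) := by
  rw [kappaWord, List.map_map]
  rfl

def kappaPrefix (b k : ℕ) : Perm ℕ :=
  ((List.range k).map fun l => pairSwaps (b - l) (l + 1)).prod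

lemma kappaPrefix_succ (b k : ℕ) :
    kappaPrefix b (k + 1) = kappaPrefix b k * pairSwaps (b - k) (k + 1) := by
  rw [kappaPrefix, List.range_succ, List.map_append, List.prod_append, List.map_singleton,
    List.prod_singleton, kappaPrefix]

lemma kappaPrefix_apply {b k : ℕ} (hk : k ≤ b) :
    (∀ t ≤ k, kappaPrefix b k (b - k + 2 * t) = b - k + t) ∧
    (∀ t ≤ k, kappaPrefix b k (b - k + 2 * t + 1) = b + 1 + t) ∧
    (∀ x, x < b - k ∨ b + k + 1 < x → kappaPrefix b k x = x) := by
  induction k with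
  | zero =>
    refine ⟨fun t ht => ?_, fun t ht => ?_, fun x _ => rfl⟩ <;>
    · obtain rfl := Nat.le_zero.mp ht
      rfl
  | succ k ih =>
    obtain ⟨hEven, hOdd, hFix⟩ := ih (by omega)
    simp only [kappaPrefix_succ, Perm.mul_apply]
    refine ⟨fun t ht => ?_, fun t ht => ?_, fun x hx => ?_⟩
    · rcases t with _ | t
      · rw [pairSwaps_apply_of_lt_or_le (by omega), hFix _ (by omega)]
      · rw [show b - (k + 1) + 2 * (t + 1) = b - k + 2 * t + 1 by omega,
          pairSwaps_apply_odd (by omega), hEven t (by omega)]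
        omega
    · rcases Nat.lt_or_ge t (k + 1) with htk | htk
      · rw [show b - (k + 1) + 2 * t + 1 = b - k + 2 * t by omega,
          pairSwaps_apply_even htk, hOdd t (by omega)]
      · rw [pairSwaps_apply_of_lt_or_le (by omega), hFix _ (by omega)]
        omega
    · rw [pairSwaps_apply_of_lt_or_le (by omega), hFix _ (by omega)]

def blockSwap (b m j : ℕ) : ℕ :=
  if b + 1 - m ≤ j ∧ j ≤ b then j + m else if b + 1 ≤ j ∧ j ≤ b + m then j - m else j

lemma kappaPrefix_pairSwaps_apply {b m : ℕ} (hm : 1 ≤ m) (hmb : m ≤ b) (y : ℕ) :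
    kappaPrefix b (m - 1) (pairSwaps (b + 1 - m) m y) =
      blockSwap b m (kappaPrefix b (m - 1) y) := by
  obtain ⟨hEven, hOdd, hFix⟩ := kappaPrefix_apply (b := b) (k := m - 1) (by omega)
  have hstart : b - (m - 1) = b + 1 - m := by omega
  rw [hstart] at hEven hOdd hFix
  by_cases hy : b + 1 - m ≤ y ∧ y ≤ b + m
  · obtain ⟨t, ht | ht⟩ := Nat.even_or_odd' (y - (b + 1 - m))
    · obtain rfl : y = b + 1 - m + 2 * t := by omega
      rw [pairSwaps_apply_even (by omega), hOdd t (by omega), hEven t (by omega), blockSwap,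
        if_pos (by omega)]
      omega
    · obtain rfl : y = b + 1 - m + 2 * t + 1 := by omega
      rw [pairSwaps_apply_odd (by omega), hEven t (by omega), hOdd t (by omega), blockSwap,
        if_neg (by omega), if_pos (by omega)]
      omega
  · rw [pairSwaps_apply_of_lt_or_le (by omega), hFix y (by omega), blockSwap, if_neg (by omega),
      if_neg (by omega)]

lemma inv_kappaPrefix (b k : ℕ) :
    (kappaPrefix b k)⁻¹ =
      ((List.range k).map fun l => pairSwaps (b - l) (l + 1)).reverse.prod := by
  simp only [kappaPrefix, List.prod_inv_reverse, List.map_map, Function.comp_def, pairSwaps_inv]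

def tauWord (b m : ℕ) : List ℕ :=
  ((List.range m).map (kappaWord b)).flatten ++
    ((List.range (m - 1)).reverse.map (kappaWord b)).flatten

lemma prod_map_tauWord {b m : ℕ} (hm : 1 ≤ m) :
    ((tauWord b m).map adjSwap).prod =
      kappaPrefix b (m - 1) * pairSwaps (b + 1 - m) m * (kappaPrefix b (m - 1))⁻¹ := by
  have hκ : (fun l => ((kappaWord b l).map adjSwap).prod) = fun l => pairSwaps (b - l) (l + 1) :=
    funext (prod_map_kappaWord b)
  obtain ⟨k, rfl⟩ : ∃ k, m = k + 1 := ⟨m - 1, by omega⟩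
  simp only [tauWord, List.map_append, List.prod_append, List.map_flatten, List.prod_flatten,
    List.map_map, Function.comp_def, hκ, List.map_reverse, Nat.add_sub_cancel, inv_kappaPrefix]
  rw [← kappaPrefix, kappaPrefix_succ, show b + 1 - (k + 1) = b - k by omega]

lemma prod_map_tauWord_apply {b m : ℕ} (hm : 1 ≤ m) (hmb : m ≤ b) (j : ℕ) :
    ((tauWord b m).map adjSwap).prod j = blockSwap b m j := by
  rw [prod_map_tauWord hm, Perm.mul_apply, Perm.mul_apply, kappaPrefix_pairSwaps_apply hm hmb,
    ← Perm.mul_apply, mul_inv_cancel, Perm.one_apply]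

lemma length_tauWord (b m : ℕ) : (tauWord b m).length = m ^ 2 := by
  have hsum : ∀ q, ((List.range q).map (List.length ∘ kappaWord b)).sum * 2 = q * (q + 1) := by
    intro q
    induction q with
    | zero => rfl
    | succ q ih =>
      rw [List.sum_range_succ, add_mul, ih, Function.comp_apply, kappaWord, List.length_map,
        List.length_range]
      ring
  have hsq : m * (m + 1) + (m - 1) * (m - 1 + 1) = m ^ 2 * 2 := by
    rcases m with _ | k
    · rfl
    · rw [Nat.add_sub_cancel]
      ring
  simp only [tauWord, List.length_append, List.length_flatten, List.map_map, List.map_reverse,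
    List.sum_reverse]
  have := hsum m
  have := hsum (m - 1)
  omega

lemma bounds_of_mem_tauWord {b m c : ℕ} (hmb : m ≤ b) (hc : c ∈ tauWord b m) :
    b + 1 - m ≤ c ∧ c + 1 ≤ b + m := by
  obtain ⟨l, hl, hcl⟩ : ∃ l < m, c ∈ kappaWord b l := by
    simp only [tauWord, List.mem_append, List.mem_flatten, List.mem_map, List.mem_reverse,
      List.mem_range] at hc
    rcases hc with ⟨_, ⟨l, hl, rfl⟩, hcl⟩ | ⟨_, ⟨l, hl, rfl⟩, hcl⟩
    exacts [⟨l, hl, hcl⟩, ⟨l, by omega, hcl⟩]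
  obtain ⟨t, ht, rfl⟩ := List.mem_map.mp hcl
  rw [List.mem_range] at ht
  omega

def inversions (S : Finset ℕ) (π : Perm ℕ) : Finset (ℕ × ℕ) :=
  (S ×ˢ S).filter fun p => p.1 < p.2 ∧ π p.2 < π p.1

lemma eq_and_eq_succ_of_adjSwap_lt {c u v : ℕ} (huv : u < v) (h : adjSwap c v < adjSwap c u) :
    u = c ∧ v = c + 1 := by
  rw [adjSwap, swap_apply_def, swap_apply_def] at h
  split_ifs at h <;> omega

lemma inversions_adjSwap_mul_subset (S : Finset ℕ) (c : ℕ) (π : Perm ℕ) :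
    inversions S (adjSwap c * π) ⊆ insert (π⁻¹ c, π⁻¹ (c + 1)) (inversions S π) := by
  rintro ⟨x, y⟩ hp
  rw [inversions, Finset.mem_filter, Perm.mul_apply, Perm.mul_apply] at hp
  obtain ⟨hxy, hlt, hswap⟩ := hp
  rw [mem_insert, inversions, Finset.mem_filter]
  by_cases hπ : π y < π x
  · exact Or.inr ⟨hxy, hlt, hπ⟩
  · have hπlt : π x < π y := lt_of_le_of_ne (not_lt.mp hπ) fun h => hlt.ne (π.injective h)
    obtain ⟨hx, hy⟩ := eq_and_eq_succ_of_adjSwap_lt hπlt hswap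
    left
    rw [← hy, ← hx]
    simp

lemma card_inversions_prod_le_length (S : Finset ℕ) (L : List ℕ) :
    #(inversions S (L.map adjSwap).prod) ≤ L.length := by
  induction L with
  | nil => simp +contextual [inversions, le_of_lt]
  | cons c L ih =>
    rw [List.map_cons, List.prod_cons, List.length_cons]
    exact (card_le_card (inversions_adjSwap_mul_subset S c _)).trans
      ((card_insert_le _ _).trans (by omega))

lemma Icc_prod_Icc_subset_inversions {b m : ℕ} {π : Perm ℕ}
    (hπ : ∀ j, π j = blockSwap b m j) :
    Icc (b + 1 - m) b ×ˢ Icc (b + 1) (b + m) ⊆ inversions (Icc (b + 1 - m) (b + m)) π := by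
  rintro ⟨x, y⟩ hp
  simp only [mem_product, mem_Icc] at hp
  simp only [inversions, mem_filter, mem_product, mem_Icc, hπ, blockSwap]
  split_ifs <;> omega

lemma sq_le_length_of_prod_eq_blockSwap {b m : ℕ} (hmb : m ≤ b) (L : List ℕ)
    (hL : ∀ j, (L.map adjSwap).prod j = blockSwap b m j) : m ^ 2 ≤ L.length :=
  calc m ^ 2 = #(Icc (b + 1 - m) b ×ˢ Icc (b + 1) (b + m)) := by
        rw [card_product, Nat.card_Icc, Nat.card_Icc]
        rw [show b + 1 - (b + 1 - m) = m by omega, show b + m + 1 - (b + 1) = m by omega, sq]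
    _ ≤ #(inversions (Icc (b + 1 - m) (b + m)) (L.map adjSwap).prod) :=
        card_le_card (Icc_prod_Icc_subset_inversions hL)
    _ ≤ L.length := card_inversions_prod_le_length _ L

end BlockSwap

open BlockSwap

theorem statement_8_general (n m r i : ℕ) (hm : 1 ≤ m) (hi1 : 1 ≤ i) (hi2 : i + 1 ≤ r)
    (N : ℕ) (hN : N = n + m * r)
    (b : ℕ) (hb : b = n + i * m)
    -- the simple transpositions
    (s : ℕ → Equiv.Perm ℕ) (hs : ∀ c, s c = Equiv.swap c (c + 1))
    -- the word for `κ_l = s_{b-l}·s_{b-l+2}·⋯·s_{b+l-2}·s_{b+l}`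
    (kappa : ℕ → List ℕ)
    (hkappa : ∀ l, kappa l = (List.range (l + 1)).map fun t => b - l + 2 * t)
    -- the concatenated word for `κ_0 κ_1 ⋯ κ_{m-2} κ_{m-1} κ_{m-2} ⋯ κ_1 κ_0`
    (W : List ℕ)
    (hW : W = ((List.range m).map kappa).flatten ++
      ((List.range (m - 1)).reverse.map kappa).flatten)
    -- the permutation `τ_i` described on letters: add `m` on the first block
    -- `{n+(i-1)m+1, …, n+im}`, subtract `m` on the second block
    -- `{n+im+1, …, n+(i+1)m}`, fix all other letters
    (target : ℕ → ℕ)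
    (htarget : ∀ j, target j =
      if n + (i - 1) * m + 1 ≤ j ∧ j ≤ n + i * m then j + m
      else if n + i * m + 1 ≤ j ∧ j ≤ n + (i + 1) * m then j - m
      else j) :
    -- `τ_i = κ_0 κ_1 ⋯ κ_{m-2} κ_{m-1} κ_{m-2} ⋯ κ_1 κ_0`
    (∀ j : ℕ, (W.map s).prod j = target j) ∧
    -- the concatenated word is an expression of length `m²` in the simple
    -- transpositions `s_1, …, s_{N-1}` …
    W.length = m ^ 2 ∧ (∀ c ∈ W, 1 ≤ c ∧ c + 1 ≤ N) ∧
    -- … and it is reduced: no shorter such expression exists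
    (∀ L : List ℕ, (∀ c ∈ L, 1 ≤ c ∧ c + 1 ≤ N) →
      (L.map s).prod = (W.map s).prod → m ^ 2 ≤ L.length) := by
  obtain rfl : s = adjSwap := funext hs
  obtain rfl : kappa = kappaWord b := funext hkappa
  obtain rfl : W = tauWord b m := hW
  obtain ⟨i, rfl⟩ : ∃ i', i = i' + 1 := ⟨i - 1, by omega⟩
  have hmb : m ≤ b := by rw [hb, add_mul]; omega
  have hbN : b + m ≤ N := by
    rw [hb, hN, mul_comm m r]
    nlinarith
  have hτ : ∀ j, target j = blockSwap b m j := by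
    intro j
    rw [htarget, blockSwap, ← hb, Nat.add_sub_cancel, show n + i * m + 1 = b + 1 - m by
      rw [hb, add_mul]; omega, show n + (i + 1 + 1) * m = b + m by rw [hb]; ring]
  have hprod : ∀ j, ((tauWord b m).map adjSwap).prod j = target j := fun j => by
    rw [prod_map_tauWord_apply hm hmb, hτ]
  refine ⟨hprod, length_tauWord b m, fun c hc => ?_, fun L _ hL => ?_⟩
  · have := bounds_of_mem_tauWord hmb hc
    omega
  · refine sq_le_length_of_prod_eq_blockSwap hmb L fun j => ?_
    rw [hL, hprod, hτ]

theorem statement_8 (n m r i : ℕ) (hm : 1 ≤ m) (hr : 2 ≤ r) (hi1 : 1 ≤ i) (hi2 : i + 1 ≤ r)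
    (N : ℕ) (hN : N = n + m * r)
    (b : ℕ) (hb : b = n + i * m)
    -- the simple transpositions
    (s : ℕ → Equiv.Perm ℕ) (hs : ∀ c, s c = Equiv.swap c (c + 1))
    -- the word for `κ_l = s_{b-l}·s_{b-l+2}·⋯·s_{b+l-2}·s_{b+l}`
    (kappa : ℕ → List ℕ)
    (hkappa : ∀ l, kappa l = (List.range (l + 1)).map fun t => b - l + 2 * t)
    -- the concatenated word for `κ_0 κ_1 ⋯ κ_{m-2} κ_{m-1} κ_{m-2} ⋯ κ_1 κ_0`
    (W : List ℕ)
    (hW : W = ((List.range m).map kappa).flatten ++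
      ((List.range (m - 1)).reverse.map kappa).flatten)
    -- the permutation `τ_i` described on letters: add `m` on the first block
    -- `{n+(i-1)m+1, …, n+im}`, subtract `m` on the second block
    -- `{n+im+1, …, n+(i+1)m}`, fix all other letters
    (target : ℕ → ℕ)
    (htarget : ∀ j, target j =
      if n + (i - 1) * m + 1 ≤ j ∧ j ≤ n + i * m then j + m
      else if n + i * m + 1 ≤ j ∧ j ≤ n + (i + 1) * m then j - m
      else j) :
    -- `τ_i = κ_0 κ_1 ⋯ κ_{m-2} κ_{m-1} κ_{m-2} ⋯ κ_1 κ_0`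
    (∀ j : ℕ, (W.map s).prod j = target j) ∧
    -- the concatenated word is an expression of length `m²` in the simple
    -- transpositions `s_1, …, s_{N-1}` …
    W.length = m ^ 2 ∧ (∀ c ∈ W, 1 ≤ c ∧ c + 1 ≤ N) ∧
    -- … and it is reduced: no shorter such expression exists
    (∀ L : List ℕ, (∀ c ∈ L, 1 ≤ c ∧ c + 1 ≤ N) →
      (L.map s).prod = (W.map s).prod → m ^ 2 ≤ L.length) :=
  statement_8_general n m r i hm hi1 hi2 N hN b hb s hs kappa hkappa W hW target htarget
end

section
/- With a = n+(i−1)m+1, b = n+im and K_l = T_{b−l}T_{b−l+2}⋯T_{b+l−2}T_{b+l} (product of l+1 pairwise commuting generators), the following identities hold in Ĥ_ζ(N) for every ζ ∈ ℂ^×: (1) for 0 ≤ l ≤ m−2: K_l·(X_aX_{a+1}⋯X_{b−l−1})·(X_{b−l}X_{b−l+2}⋯X_{b+l})·K_l = ζ^{l+1}·(X_aX_{a+1}⋯X_{b−l−2})·(X_{b−l−1}X_{b−l+1}X_{b−l+3}⋯X_{b+l+1}); (2) K_{m−1}·(X_aX_{a+2}⋯X_{b+m−1})·K_{m−1} = ζ^{m}·(X_{a+1}X_{a+3}⋯X_{b+m});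 (3) for 0 ≤ l ≤ m−2: K_l·(X_{b−l}X_{b−l+2}⋯X_{b+l})·(X_{b+l+2}X_{b+l+3}⋯X_{b+m})·K_l = ζ^{l+1}·(X_{b−l+1}X_{b−l+3}⋯X_{b+l−1})·(X_{b+l+1}X_{b+l+2}⋯X_{b+m}). -/
/- Statement 9: identities among the generators of the affine Hecke algebra `Ĥ_ζ(N)`.
We state them universally: in any `ℂ`-algebra containing elements `X_1, …, X_N`
(invertible, pairwise commuting) and `T_1, …, T_{N-1}` satisfying the defining relations
of `Ĥ_ζ(N)`; this is equivalent to the identities holding in `Ĥ_ζ(N)` itself. -/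

/-- `seqProd f start step len = f start * f (start + step) * ⋯` (`len` factors). -/
def seqProd {A : Type*} [Ring A] (f : ℕ → A) (start step len : ℕ) : A :=
  ((List.range len).map fun t => f (start + step * t)).prod

lemma seqProd_succ {A : Type*} [Ring A] (f : ℕ → A) (s st L : ℕ) :
    seqProd f s st (L + 1) = seqProd f s st L * f (s + st * L) := by
  simp [seqProd, List.range_succ]

lemma seqProd_cons {A : Type*} [Ring A] (f : ℕ → A) (s st : ℕ) :
    ∀ L, seqProd f s st (L + 1) = f s * seqProd f (s + st) st L := by
  intro L
  induction L with
  | zero => simp [seqProd, List.range_succ]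
  | succ L ih =>
    rw [seqProd_succ f s st (L + 1), ih, seqProd_succ f (s + st) st L, mul_assoc]
    have h : s + st * (L + 1) = s + st + st * L := by ring
    rw [h]

lemma seqProd_comm {A : Type*} [Ring A] (f : ℕ → A) (z : A) (s st L : ℕ)
    (h : ∀ t, t < L → z * f (s + st * t) = f (s + st * t) * z) :
    z * seqProd f s st L = seqProd f s st L * z := by
  induction L with
  | zero => simp [seqProd]
  | succ L ih =>
    rw [seqProd_succ, ← mul_assoc, ih (fun t ht => h t (by omega)), mul_assoc,
      h L (by omega), ← mul_assoc]

lemma hecke_core {A : Type*} [Ring A] [Algebra ℂ A] (ζ : ℂ) (N : ℕ) (X T : ℕ → A)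
    (hTX : ∀ c j, 1 ≤ c → c + 1 ≤ N → 1 ≤ j → j ≤ N → j ≠ c → j ≠ c + 1 →
      T c * X j = X j * T c)
    (hTXT : ∀ c, 1 ≤ c → c + 1 ≤ N → T c * X c * T c = ζ • X (c + 1))
    (hTT : ∀ c d, 1 ≤ c → c + 1 ≤ N → 1 ≤ d → d + 1 ≤ N → c + 1 < d →
      T c * T d = T d * T c) :
    ∀ L s, 1 ≤ s → s + 2 * L ≤ N + 1 →
      seqProd T s 2 L * seqProd X s 2 L * seqProd T s 2 L =
        ζ ^ L • seqProd X (s + 1) 2 L := by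
  intro L
  induction L with
  | zero => intro s _ _; simp [seqProd]
  | succ L ih =>
    intro s hs hsN
    have hc1 : 1 ≤ s + 2 * L := by omega
    have hc2 : s + 2 * L + 1 ≤ N := by omega
    rw [seqProd_succ T s 2 L, seqProd_succ X s 2 L, seqProd_succ X (s + 1) 2 L]
    set PT := seqProd T s 2 L with hPT
    set PX := seqProd X s 2 L with hPX
    set c := s + 2 * L with hc
    have comm1 : T c * PX = PX * T c :=
      seqProd_comm X (T c) s 2 L (fun t ht =>
        hTX c (s + 2 * t) hc1 hc2 (by omega) (by omega) (by omega) (by omega))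
    have comm2 : X c * PT = PT * X c :=
      seqProd_comm T (X c) s 2 L (fun t ht =>
        (hTX (s + 2 * t) c (by omega) (by omega) (by omega) (by omega)
          (by omega) (by omega)).symm)
    have comm3 : T c * PT = PT * T c :=
      seqProd_comm T (T c) s 2 L (fun t ht =>
        (hTT (s + 2 * t) c (by omega) (by omega) (by omega) (by omega) (by omega)).symm)
    have hidx : s + 1 + 2 * L = c + 1 := by omega
    calc PT * T c * (PX * X c) * (PT * T c)
        = PT * ((T c * PX) * (X c * PT)) * T c := by simp only [mul_assoc]
      _ = PT * ((PX * T c) * (PT * X c)) * T c := by rw [comm1, comm2]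
      _ = PT * PX * ((T c * PT) * (X c * T c)) := by simp only [mul_assoc]
      _ = PT * PX * ((PT * T c) * (X c * T c)) := by rw [comm3]
      _ = (PT * PX * PT) * (T c * X c * T c) := by simp only [mul_assoc]
      _ = (ζ ^ L • seqProd X (s + 1) 2 L) * (ζ • X (c + 1)) := by
          rw [ih s hs (by omega), hTXT c hc1 hc2]
      _ = ζ ^ (L + 1) • (seqProd X (s + 1) 2 L * X (s + 1 + 2 * L)) := by
          rw [hidx, smul_mul_assoc, mul_smul_comm, smul_smul, ← pow_succ]

theorem statement_9
    (n m r i : ℕ) (hm : 1 ≤ m) (hr : 2 ≤ r) (hi1 : 1 ≤ i) (hi2 : i + 1 ≤ r)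
    (N : ℕ) (hN : N = n + m * r)
    (ζ : ℂ) (hζ : ζ ≠ 0)
    (A : Type*) [Ring A] [Algebra ℂ A]
    (X T : ℕ → A)
    -- defining relations of the affine Hecke algebra `Ĥ_ζ(N)` of `GL_N`
    (hXunit : ∀ j, 1 ≤ j → j ≤ N → IsUnit (X j))
    (hXX : ∀ j k, 1 ≤ j → j ≤ N → 1 ≤ k → k ≤ N → X j * X k = X k * X j)
    (hTX : ∀ c j, 1 ≤ c → c + 1 ≤ N → 1 ≤ j → j ≤ N → j ≠ c → j ≠ c + 1 →
      T c * X j = X j * T c)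
    (hTXT : ∀ c, 1 ≤ c → c + 1 ≤ N → T c * X c * T c = ζ • X (c + 1))
    (hquad : ∀ c, 1 ≤ c → c + 1 ≤ N → (T c + 1) * (T c - ζ • (1 : A)) = 0)
    (hTT : ∀ c d, 1 ≤ c → c + 1 ≤ N → 1 ≤ d → d + 1 ≤ N → c + 1 < d →
      T c * T d = T d * T c)
    (hbraid : ∀ c, 1 ≤ c → c + 2 ≤ N →
      T c * T (c + 1) * T c = T (c + 1) * T c * T (c + 1))
    (a b : ℕ) (ha : a = n + (i - 1) * m + 1) (hb : b = n + i * m)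
    -- `K_l = T_{b-l} T_{b-l+2} ⋯ T_{b+l-2} T_{b+l}`
    (K : ℕ → A) (hK : ∀ l, K l = seqProd T (b - l) 2 (l + 1)) :
    -- (1)
    (∀ l, l + 2 ≤ m →
      K l * seqProd X a 1 (m - 1 - l) * seqProd X (b - l) 2 (l + 1) * K l =
        ζ ^ (l + 1) • (seqProd X a 1 (m - 2 - l) * seqProd X (b - l - 1) 2 (l + 2))) ∧
    -- (2)
    (K (m - 1) * seqProd X a 2 m * K (m - 1) = ζ ^ m • seqProd X (a + 1) 2 m) ∧
    -- (3)
    (∀ l, l + 2 ≤ m →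
      K l * seqProd X (b - l) 2 (l + 1) * seqProd X (b + l + 2) 1 (m - l - 1) * K l =
        ζ ^ (l + 1) • (seqProd X (b - l + 1) 2 l * seqProd X (b + l + 1) 1 (m - l))) := by
  obtain ⟨i', rfl⟩ : ∃ i', i = i' + 1 := ⟨i - 1, by omega⟩
  obtain ⟨p, hp⟩ : ∃ p, i' * m = p := ⟨_, rfl⟩
  have ha' : a = n + p + 1 := by rw [ha, Nat.add_sub_cancel, hp]
  have hb' : b = n + p + m := by
    rw [hb, Nat.succ_mul, hp]; omega
  obtain ⟨q, hq, hpq⟩ : ∃ q, m * r = q ∧ p + m + m ≤ q := by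
    refine ⟨m * r, rfl, ?_⟩
    calc p + m + m = m * (i' + 2) := by rw [← hp]; ring
      _ ≤ m * r := Nat.mul_le_mul le_rfl (by omega)
  have hN' : N = n + q := by rw [hN, hq]
  clear hN ha hb hp hq
  have hcore := hecke_core ζ N X T hTX hTXT hTT
  have hKX : ∀ s L j, 1 ≤ s → s + 2 * L + 1 ≤ N → 1 ≤ j → j ≤ N →
      (j < s ∨ s + 2 * L + 1 < j) →
      seqProd T s 2 (L + 1) * X j = X j * seqProd T s 2 (L + 1) := by
    intro s L j hs hsN hj1 hjN hj
    exact (seqProd_comm T (X j) s 2 (L + 1) (fun t ht =>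
      (hTX (s + 2 * t) j (by omega) (by omega) hj1 hjN (by omega) (by omega)).symm)).symm
  refine ⟨?_, ?_, ?_⟩
  · -- (1)
    intro l hl
    rw [hK l]
    have h1 : 1 ≤ b - l := by omega
    have h2 : (b - l) + 2 * l + 1 ≤ N := by omega
    have hcomm : seqProd T (b - l) 2 (l + 1) * seqProd X a 1 (m - 1 - l)
        = seqProd X a 1 (m - 1 - l) * seqProd T (b - l) 2 (l + 1) :=
      seqProd_comm X (seqProd T (b - l) 2 (l + 1)) a 1 (m - 1 - l) (fun t ht =>
        hKX (b - l) l (a + 1 * t) h1 h2 (by omega) (by omega) (by omega))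
    have hc := hcore (l + 1) (b - l) h1 (by omega)
    calc seqProd T (b - l) 2 (l + 1) * seqProd X a 1 (m - 1 - l) *
          seqProd X (b - l) 2 (l + 1) * seqProd T (b - l) 2 (l + 1)
        = seqProd X a 1 (m - 1 - l) * (seqProd T (b - l) 2 (l + 1) *
            seqProd X (b - l) 2 (l + 1) * seqProd T (b - l) 2 (l + 1)) := by
          rw [hcomm]; simp only [mul_assoc]
      _ = seqProd X a 1 (m - 1 - l) * (ζ ^ (l + 1) • seqProd X (b - l + 1) 2 (l + 1)) := by
          rw [hc]
      _ = ζ ^ (l + 1) • (seqProd X a 1 (m - 1 - l) * seqProd X (b - l + 1) 2 (l + 1)) := by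
          rw [mul_smul_comm]
      _ = ζ ^ (l + 1) • (seqProd X a 1 (m - 2 - l) * seqProd X (b - l - 1) 2 (l + 2)) := by
          congr 1
          have e1 : m - 1 - l = (m - 2 - l) + 1 := by omega
          have e2 : l + 2 = (l + 1) + 1 := by omega
          rw [e1, seqProd_succ X a 1 (m - 2 - l), e2, seqProd_cons X (b - l - 1) 2 (l + 1)]
          have e3 : a + 1 * (m - 2 - l) = b - l - 1 := by omega
          have e4 : b - l - 1 + 2 = b - l + 1 := by omega
          rw [e3, e4, mul_assoc]
  · -- (2)
    rw [hK (m - 1)]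
    have e1 : m - 1 + 1 = m := by omega
    have e2 : b - (m - 1) = a := by omega
    rw [e1, e2]
    exact hcore m a (by omega) (by omega)
  · -- (3)
    intro l hl
    rw [hK l]
    have h1 : 1 ≤ b - l := by omega
    have h2 : (b - l) + 2 * l + 1 ≤ N := by omega
    have hcomm : seqProd T (b - l) 2 (l + 1) * seqProd X (b + l + 2) 1 (m - l - 1)
        = seqProd X (b + l + 2) 1 (m - l - 1) * seqProd T (b - l) 2 (l + 1) :=
      seqProd_comm X (seqProd T (b - l) 2 (l + 1)) (b + l + 2) 1 (m - l - 1) (fun t ht =>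
        hKX (b - l) l (b + l + 2 + 1 * t) h1 h2 (by omega) (by omega) (by omega))
    have hc := hcore (l + 1) (b - l) h1 (by omega)
    calc seqProd T (b - l) 2 (l + 1) * seqProd X (b - l) 2 (l + 1) *
          seqProd X (b + l + 2) 1 (m - l - 1) * seqProd T (b - l) 2 (l + 1)
        = (seqProd T (b - l) 2 (l + 1) * seqProd X (b - l) 2 (l + 1)) *
            (seqProd X (b + l + 2) 1 (m - l - 1) * seqProd T (b - l) 2 (l + 1)) := by
          rw [mul_assoc]
      _ = (seqProd T (b - l) 2 (l + 1) * seqProd X (b - l) 2 (l + 1)) *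
            (seqProd T (b - l) 2 (l + 1) * seqProd X (b + l + 2) 1 (m - l - 1)) := by
          rw [← hcomm]
      _ = (seqProd T (b - l) 2 (l + 1) * seqProd X (b - l) 2 (l + 1) *
            seqProd T (b - l) 2 (l + 1)) * seqProd X (b + l + 2) 1 (m - l - 1) := by
          simp only [mul_assoc]
      _ = (ζ ^ (l + 1) • seqProd X (b - l + 1) 2 (l + 1)) *
            seqProd X (b + l + 2) 1 (m - l - 1) := by rw [hc]
      _ = ζ ^ (l + 1) • (seqProd X (b - l + 1) 2 (l + 1) *
            seqProd X (b + l + 2) 1 (m - l - 1)) := by rw [smul_mul_assoc]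
      _ = ζ ^ (l + 1) • (seqProd X (b - l + 1) 2 l * seqProd X (b + l + 1) 1 (m - l)) := by
          congr 1
          obtain ⟨w, hw⟩ : ∃ w, m - l - 1 = w := ⟨_, rfl⟩
          have e1 : m - l = w + 1 := by omega
          rw [hw, e1, seqProd_succ X (b - l + 1) 2 l, seqProd_cons X (b + l + 1) 1 w]
          have e2 : b - l + 1 + 2 * l = b + l + 1 := by omega
          have e3 : b + l + 1 + 1 = b + l + 2 := by omega
          rw [e2, e3, mul_assoc]
end

section
/- Let I = {0,1,…,n+mr−1} ∖ {n, n+m, …, n+(r−1)m} and fix i with 1 ≤ i ≤ r−1. Define σ_i(j) = j+m if n+(i−1)m < j < n+im, σ_i(j) = j−m if n+im < j < n+(i+1)m, and σ_i(j) = j otherwise. Let T_{τ_i} = K_0K_1⋯K_{m−2}K_{m−1}K_{m−2}⋯K_1K_0, where b = n+im and K_l = T_{b−l}T_{b−l+2}⋯T_{b+l}. Then in H(Γ_{n+mr}), for every j ∈ I one has T_{τ_i}·T_j = T_{σ_i(j)}·T_{τ_i} (in particular T_{τ_i} commutes with T_0). Consequently T_{τ_i} normalizes the parabolic subalgebra H(Γ_{n,(m^r)})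 generated by {T_j : j ∈ I}. -/
/-!
Put the letters `T (c + k - j)`, `k, j < m`, with `c = n + i m`, on an `m × m` grid. Reading
the grid antidiagonal by antidiagonal gives `T_{τ_i}`; reading it row by row or column by
column gives the same element, since two letters whose relative order changes are at distance
at least `2` and commute. A row `T_{c+k} ⋯ T_{c+k-m+1}` satisfies `row · T_{x+1} = T_x · row`,
and a column `T_{c-j} ⋯ T_{c-j+m-1}` satisfies `col · T_x = T_{x+1} · col`, each by a single
braid relation. So the row reading moves a letter of the right block to the left block and the
column reading moves a letter of the left block to the right one; letters outside both blocks
commute with the whole grid. Since `σ_i` is an involution of `I`, `T_{τ_i}` normalizes the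
parabolic subalgebra.
-/

open List

section Monoid

variable {M : Type*} [Monoid M]

theorem prod_map_range_mul_of_commute (a b : ℕ → M) (n : ℕ)
    (h : ∀ d d', d < d' → d' < n → Commute (b d) (a d')) :
    ((range n).map fun d => a d * b d).prod =
      ((range n).map a).prod * ((range n).map b).prod := by
  induction n with
  | zero => simp
  | succ n ih =>
    have hb : Commute ((range n).map b).prod (a n) :=
      Commute.list_prod_left _ _ fun x hx => by
        obtain ⟨d, hd, rfl⟩ := mem_map.1 hx
        exact h d n (mem_range.1 hd) n.lt_succ_self
    simp only [range_succ, map_append, prod_append, map_cons, map_nil, prod_cons, prod_nil,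
      mul_one]
    rw [ih fun d d' hdd' hd' => h d d' hdd' (by omega), mul_assoc, ← mul_assoc _ (a n),
      hb.eq]
    simp only [mul_assoc]

theorem prod_map_range_prod_map_range_comm (f : ℕ → ℕ → M) (p q : ℕ)
    (h : ∀ k k' j j', k < k' → k' < p → j' < j → j < q → Commute (f k j) (f k' j')) :
    ((range p).map fun k => ((range q).map (f k)).prod).prod =
      ((range q).map fun j => ((range p).map (f · j)).prod).prod := by
  induction p with
  | zero => simp
  | succ p ih =>
    have hcol : ∀ j j', j < j' → j' < q →
        Commute (f p j) ((range p).map (f · j')).prod := fun j j' hjj' hj' =>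
      Commute.list_prod_right _ _ fun x hx => by
        obtain ⟨k, hk, rfl⟩ := mem_map.1 hx
        exact (h k p j' j (mem_range.1 hk) p.lt_succ_self hjj' hj').symm
    simp only [range_succ, map_append, prod_append, map_cons, map_nil, prod_cons, prod_nil,
      mul_one]
    rw [ih fun k k' j j' hkk' hk' => h k k' j j' hkk' (by omega),
      ← prod_map_range_mul_of_commute _ _ q hcol]

theorem prod_map_range_eq_of_eq_one {f : ℕ → M} {a b n : ℕ} (hn : a + b ≤ n)
    (hf : ∀ k < n, k < a ∨ a + b ≤ k → f k = 1) :
    ((range n).map f).prod = ((range b).map fun j => f (a + j)).prod := by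
  obtain ⟨e, rfl⟩ := Nat.exists_eq_add_of_le hn
  have hone : ∀ l : List ℕ, (∀ k ∈ l, k < a + b + e ∧ (k < a ∨ a + b ≤ k)) →
      (l.map f).prod = 1 := fun l hl =>
    prod_eq_one fun x hx => by
      obtain ⟨k, hk, rfl⟩ := mem_map.1 hx
      exact hf k (hl k hk).1 (hl k hk).2
  rw [range_add, range_add, map_append, map_append, prod_append, prod_append, map_map,
    hone (range a) (fun k hk => by simp at hk; omega),
    hone ((range e).map fun x => a + b + x) (fun k hk => by simp at hk; omega), one_mul, mul_one]
  rfl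

def FarCommuteOn (T : ℕ → M) (lo hi : ℕ) : Prop :=
  ∀ x y, lo ≤ x → x + 2 ≤ y → y ≤ hi → Commute (T x) (T y)

structure BraidRelationsOn (T : ℕ → M) (lo hi : ℕ) : Prop where
  farCommute : FarCommuteOn T lo hi
  braid : ∀ x, lo ≤ x → x + 1 ≤ hi → T x * T (x + 1) * T x = T (x + 1) * T x * T (x + 1)

variable {T : ℕ → M} {lo hi : ℕ}

theorem BraidRelationsOn.reflect (hT : BraidRelationsOn T lo hi) {Q : ℕ} (hQ : Q ≤ hi) :
    BraidRelationsOn (fun t => T (Q - t)) 0 (Q - lo) where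
  farCommute x y _ hxy hy := (hT.farCommute (Q - y) (Q - x) (by omega) (by omega) (by omega)).symm
  braid x _ hx := by
    have h := hT.braid (Q - (x + 1)) (by omega) (by omega)
    rw [show Q - (x + 1) + 1 = Q - x by omega] at h
    exact h.symm

theorem BraidRelationsOn.prod_increasing_mul (hT : BraidRelationsOn T lo hi) {p s x : ℕ}
    (hp : lo ≤ p) (hs : p + s ≤ hi + 1) (hpx : p ≤ x) (hxs : x + 2 ≤ p + s) :
    ((range s).map fun t => T (p + t)).prod * T x =
      T (x + 1) * ((range s).map fun t => T (p + t)).prod := by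
  obtain ⟨u, rfl⟩ : ∃ u, s = x - p + 2 + u := ⟨s - (x - p + 2), by omega⟩
  induction u with
  | zero =>
    set R := ((range (x - p)).map fun t => T (p + t)).prod
    have hR : Commute R (T (x + 1)) := Commute.list_prod_left _ _ fun y hy => by
      obtain ⟨t, ht, rfl⟩ := mem_map.1 hy
      exact hT.farCommute _ _ (by omega) (by simp at ht; omega) (by omega)
    have hbraid := hT.braid x (by omega) (by omega)
    simp only [show x - p + 2 = x - p + 1 + 1 by omega, range_succ, map_append,
      prod_append, map_cons, map_nil, prod_cons, prod_nil, mul_one,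
      show p + (x - p) = x by omega, show p + (x - p + 1) = x + 1 by omega]
    rw [mul_assoc R, mul_assoc R, hbraid, ← mul_assoc, ← mul_assoc, hR.eq]
    simp only [mul_assoc]
  | succ u ih =>
    have hcomm : Commute (T x) (T (p + (x - p + 2 + u))) :=
      hT.farCommute _ _ (by omega) (by omega) (by omega)
    rw [← Nat.add_assoc, range_succ, map_append, prod_append, map_singleton, prod_singleton,
      mul_assoc, ← hcomm.eq, ← mul_assoc, ih (by omega) (by omega), mul_assoc]

theorem BraidRelationsOn.prod_decreasing_mul (hT : BraidRelationsOn T lo hi) {Q s x : ℕ}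
    (hQ : Q ≤ hi) (hs : lo + s ≤ Q + 1) (hxQ : x + 1 ≤ Q) (hxs : Q + 1 ≤ x + s) :
    ((range s).map fun t => T (Q - t)).prod * T (x + 1) =
      T x * ((range s).map fun t => T (Q - t)).prod := by
  have h := (hT.reflect hQ).prod_increasing_mul (p := 0) (s := s) (x := Q - (x + 1))
    le_rfl (by omega) (Nat.zero_le _) (by omega)
  simp only [Nat.zero_add, show Q - (Q - (x + 1)) = x + 1 by omega,
    show Q - (Q - (x + 1) + 1) = x by omega] at h
  exact h

def gridRows (T : ℕ → M) (c p q : ℕ) : M :=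
  ((range p).map fun k => ((range q).map fun j => T (c + k - j)).prod).prod

def gridCols (T : ℕ → M) (c p q : ℕ) : M :=
  ((range q).map fun j => ((range p).map fun k => T (c + k - j)).prod).prod

theorem FarCommuteOn.gridRows_eq_gridCols (hT : FarCommuteOn T lo hi) {c p q : ℕ}
    (hlo : lo + q ≤ c + 1) (hhi : c + p ≤ hi + 1) :
    gridRows T c p q = gridCols T c p q :=
  prod_map_range_prod_map_range_comm _ p q fun k k' j j' hkk' hk' hjj' hj =>
    hT _ _ (by omega) (by omega) (by omega)

theorem BraidRelationsOn.gridRows_mul (hT : BraidRelationsOn T lo hi) {c p q x : ℕ}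
    (hlo : lo + q ≤ c + 1) (hhi : c + p ≤ hi + 1) (hxq : c + 1 ≤ x + q) (hxc : x + 1 ≤ c) :
    gridRows T c p q * T (x + p) = T x * gridRows T c p q := by
  induction p with
  | zero => simp [gridRows]
  | succ p ih =>
    have hrow := hT.prod_decreasing_mul (Q := c + p) (s := q) (x := x + p)
      (by omega) (by omega) (by omega) (by omega)
    simp only [gridRows, range_succ, map_append, prod_append, map_singleton, prod_singleton]
      at ih ⊢
    rw [← Nat.add_assoc, mul_assoc, hrow, ← mul_assoc, ih (by omega), mul_assoc]

theorem BraidRelationsOn.gridCols_mul (hT : BraidRelationsOn T lo hi) {c p q x : ℕ}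
    (hlo : lo + q ≤ c + 1) (hhi : c + p ≤ hi + 1) (hxq : c + 1 ≤ x + q)
    (hxp : x + q + 1 ≤ c + p) :
    gridCols T c p q * T x = T (x + q) * gridCols T c p q := by
  induction q generalizing x with
  | zero => simp [gridCols]
  | succ q ih =>
    have hcol := hT.prod_increasing_mul (p := c - q) (s := p) (x := x)
      (by omega) (by omega) (by omega) (by omega)
    simp only [gridCols, range_succ, map_append, prod_append, map_singleton, prod_singleton]
      at ih ⊢
    rw [map_congr_left fun k _ => show T (c + k - q) = T (c - q + k) by congr 1; omega,
      mul_assoc, hcol, ← mul_assoc, ih (by omega) (by omega) (by omega),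
      show x + 1 + q = x + (q + 1) by omega, mul_assoc]

theorem commute_gridRows {a : M} {c p q : ℕ}
    (h : ∀ y, c + 1 ≤ y + q → y + 1 ≤ c + p → Commute a (T y)) :
    Commute a (gridRows T c p q) :=
  Commute.list_prod_right _ _ fun x hx => by
    obtain ⟨k, hk, rfl⟩ := mem_map.1 hx
    refine Commute.list_prod_right _ _ fun y hy => ?_
    obtain ⟨j, hj, rfl⟩ := mem_map.1 hy
    simp only [mem_range] at hk hj
    exact h _ (by omega) (by omega)

def gridAntidiagonal (T : ℕ → M) (c l : ℕ) : M :=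
  ((range (l + 1)).map fun t => T (c - l + 2 * t)).prod

theorem FarCommuteOn.prod_gridAntidiagonal_eq_gridRows (hT : FarCommuteOn T lo hi) {c m : ℕ}
    (hlo : lo + m ≤ c + 1) (hhi : c + m ≤ hi + 1) :
    ((range m).map (gridAntidiagonal T c)).prod *
      ((range (m - 1)).reverse.map (gridAntidiagonal T c)).prod = gridRows T c m m := by
  -- `F d k` is the letter in row `k` and column `d - k`, padded by `1` off the grid, so that
  -- `∏ k, F d k` is the `d`-th antidiagonal and `∏ d, F d k` the `k`-th row.
  let F : ℕ → ℕ → M := fun d k => if k ≤ d ∧ d < k + m then T (c + k - (d - k)) else 1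
  have hupper : ∀ d < m, ((range m).map (F d)).prod = gridAntidiagonal T c d := by
    intro d hd
    rw [prod_map_range_eq_of_eq_one (a := 0) (b := d + 1) (by omega)
      fun k _ hk => if_neg (by omega)]
    refine congrArg prod (map_congr_left fun t ht => ?_)
    simp only [mem_range] at ht
    simp only [if_pos (show 0 + t ≤ d ∧ d < 0 + t + m by omega)]
    congr 1; omega
  have hlower : ∀ e < m - 1, ((range m).map (F (m + e))).prod =
      gridAntidiagonal T c (m - 1 - 1 - e) := by
    intro e he
    rw [prod_map_range_eq_of_eq_one (a := e + 1) (b := m - 1 - e) (by omega)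
      fun k _ hk => if_neg (by omega), gridAntidiagonal,
      show m - 1 - 1 - e + 1 = m - 1 - e by omega]
    refine congrArg prod (map_congr_left fun t ht => ?_)
    simp only [mem_range] at ht
    simp only [if_pos (show e + 1 + t ≤ m + e ∧ m + e < e + 1 + t + m by omega)]
    congr 1; omega
  have hrow : ∀ k < m, ((range (2 * m - 1)).map (F · k)).prod =
      ((range m).map fun j => T (c + k - j)).prod := by
    intro k hk
    rw [prod_map_range_eq_of_eq_one (a := k) (b := m) (by omega)
      fun d _ hd => if_neg (by omega)]
    refine congrArg prod (map_congr_left fun j hj => ?_)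
    simp only [mem_range] at hj
    simp only [if_pos (show k ≤ k + j ∧ k + j < k + m by omega)]
    congr 1; omega
  have hF : ∀ d d' k k', d < d' → d' < 2 * m - 1 → k' < k → k < m →
      Commute (F d k) (F d' k') := by
    intro d d' k k' hdd' _ hkk' _
    simp only [F]
    split_ifs
    · exact (hT _ _ (by omega) (by omega) (by omega)).symm
    all_goals simp
  have hrev : (range (m - 1)).reverse = (range (m - 1)).map (m - 1 - 1 - ·) := by
    rw [range_eq_range', reverse_range', Nat.zero_add, ← range_eq_range']
  calc _ = ((range (2 * m - 1)).map fun d => ((range m).map (F d)).prod).prod := by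
        rw [show 2 * m - 1 = m + (m - 1) by omega, range_add, map_append, prod_append, map_map,
          hrev, map_map]
        congr 1
        · exact congrArg prod (map_congr_left fun d hd => (hupper d (by simpa using hd)).symm)
        · exact congrArg prod (map_congr_left fun e he =>
            (hlower e (by simpa using he)).symm)
    _ = ((range m).map fun k => ((range (2 * m - 1)).map (F · k)).prod).prod :=
        prod_map_range_prod_map_range_comm F _ _ hF
    _ = gridRows T c m m := congrArg prod (map_congr_left fun k hk => hrow k (by simpa using hk))

def swapIndex (c m j : ℕ) : ℕ :=
  if c - m < j ∧ j < c then j + m else if c < j ∧ j < c + m then j - m else j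

theorem BraidRelationsOn.gridRows_mul_eq_mul_gridRows (hT : BraidRelationsOn T lo hi)
    {c m j : ℕ} (hlo : lo + m ≤ c + 1) (hhi : c + m ≤ hi + 1) (hjlo : lo ≤ j)
    (hjhi : j ≤ hi) (hj : j ≠ c - m ∧ j ≠ c ∧ j ≠ c + m) :
    gridRows T c m m * T j = T (swapIndex c m j) * gridRows T c m m := by
  unfold swapIndex
  split_ifs with hleft hright
  · rw [hT.farCommute.gridRows_eq_gridCols hlo hhi]
    exact hT.gridCols_mul hlo hhi (by omega) (by omega)
  · have h := hT.gridRows_mul hlo hhi (x := j - m) (by omega) (by omega)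
    rwa [Nat.sub_add_cancel (by omega)] at h
  · refine (commute_gridRows fun y hy hy' => ?_).eq.symm
    rcases Nat.lt_or_gt_of_ne hj.1 with h | h
    · exact hT.farCommute _ _ hjlo (by omega) (by omega)
    · exact (hT.farCommute _ _ (by omega) (by omega) hjhi).symm

end Monoid

theorem Algebra.exists_rel_of_mem_adjoin {R A : Type*} [CommSemiring R] [Semiring A]
    [Algebra R A] {s : Set A} (ρ : A → A → Prop)
    (halgebraMap : ∀ r, ρ (algebraMap R A r) (algebraMap R A r))
    (hadd : ∀ x x' y y', ρ x y → ρ x' y' → ρ (x + x') (y + y'))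
    (hmul : ∀ x x' y y', ρ x y → ρ x' y' → ρ (x * x') (y * y'))
    (hs : ∀ x ∈ s, ∃ y ∈ adjoin R s, ρ x y) {x : A} (hx : x ∈ adjoin R s) :
    ∃ y ∈ adjoin R s, ρ x y := by
  induction hx using Algebra.adjoin_induction with
  | mem x hx => exact hs x hx
  | algebraMap r => exact ⟨_, Subalgebra.algebraMap_mem _ r, halgebraMap r⟩
  | add x x' _ _ ih ih' =>
    obtain ⟨y, hy, h⟩ := ih
    obtain ⟨y', hy', h'⟩ := ih'
    exact ⟨y + y', add_mem hy hy', hadd x x' y y' h h'⟩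
  | mul x x' _ _ ih ih' =>
    obtain ⟨y, hy, h⟩ := ih
    obtain ⟨y', hy', h'⟩ := ih'
    exact ⟨y * y', mul_mem hy hy', hmul x x' y y' h h'⟩

theorem Algebra.image_mul_left_adjoin_eq_image_mul_right {R A : Type*} [CommSemiring R]
    [Semiring A] [Algebra R A] {s : Set A} {t : A}
    (hl : ∀ x ∈ s, ∃ y ∈ s, t * x = y * t) (hr : ∀ y ∈ s, ∃ x ∈ s, t * x = y * t) :
    (t * ·) '' (adjoin R s : Set A) = (· * t) '' (adjoin R s : Set A) := by
  have hmul : ∀ x x' y y' : A, t * x = y * t → t * x' = y' * t → t * (x * x') = y * y' * t :=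
    fun x x' y y' h h' => by rw [← mul_assoc, h, mul_assoc, h', mul_assoc]
  ext z
  constructor
  · rintro ⟨x, hx, rfl⟩
    obtain ⟨y, hy, h⟩ := exists_rel_of_mem_adjoin (R := R) (fun x y => t * x = y * t)
      (fun r => (commutes r t).symm) (fun _ _ _ _ h h' => by rw [mul_add, h, h', add_mul])
      hmul (fun x hx => (hl x hx).imp fun _ ⟨hy, h⟩ => ⟨subset_adjoin hy, h⟩) hx
    exact ⟨y, hy, h.symm⟩
  · rintro ⟨y, hy, rfl⟩
    obtain ⟨x, hx, h⟩ := exists_rel_of_mem_adjoin (R := R) (fun y x => t * x = y * t)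
      (fun r => (commutes r t).symm) (fun _ _ _ _ h h' => by rw [mul_add, h, h', add_mul])
      (fun _ _ _ _ => hmul _ _ _ _)
      (fun y hy => (hr y hy).imp fun _ ⟨hx, h⟩ => ⟨subset_adjoin hx, h⟩) hy
    exact ⟨x, hx, h⟩

theorem swapIndex_swapIndex {c m : ℕ} (h : m ≤ c) (j : ℕ) :
    swapIndex c m (swapIndex c m j) = j := by
  unfold swapIndex
  split_ifs <;> omega

theorem sub_one_mul_add_self {i : ℕ} (hi : 1 ≤ i) (m : ℕ) : (i - 1) * m + m = i * m := by
  rw [← Nat.succ_mul, Nat.succ_eq_add_one, Nat.sub_add_cancel hi]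

theorem ne_add_mul_of_lt_of_lt {n m s j : ℕ} (h₁ : n + s * m < j) (h₂ : j < n + s * m + m)
    (t : ℕ) : j ≠ n + t * m := by
  rintro rfl
  have hst : s < t := Nat.lt_of_mul_lt_mul_right (a := m) (by omega)
  have hts : t < s + 1 := Nat.lt_of_mul_lt_mul_right (a := m) (by rw [Nat.succ_mul]; omega)
  omega

theorem swapIndex_mem {n m r i j : ℕ} (hi1 : 1 ≤ i) (hi2 : i + 1 ≤ r) (hjN : j < n + m * r)
    (hj : ¬∃ t, t < r ∧ j = n + t * m) :
    swapIndex (n + i * m) m j < n + m * r ∧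
      ¬∃ t, t < r ∧ swapIndex (n + i * m) m j = n + t * m := by
  have hi' := sub_one_mul_add_self hi1 m
  have hr := Nat.mul_le_mul_right m hi2
  rw [Nat.succ_mul, Nat.mul_comm r] at hr
  refine ⟨by unfold swapIndex; split_ifs <;> omega, ?_⟩
  rintro ⟨t, ht, hjt⟩
  unfold swapIndex at hjt
  split_ifs at hjt
  · exact ne_add_mul_of_lt_of_lt (s := i) (by omega) (by omega) t hjt
  · exact ne_add_mul_of_lt_of_lt (s := i - 1) (by omega) (by omega) t hjt
  · exact hj ⟨t, ht, hjt⟩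

theorem swapIndex_add_mul {n m i : ℕ} (hi : 1 ≤ i) (j : ℕ) :
    swapIndex (n + i * m) m j =
      if n + (i - 1) * m < j ∧ j < n + i * m then j + m
      else if n + i * m < j ∧ j < n + (i + 1) * m then j - m
      else j := by
  have hi' := sub_one_mul_add_self hi m
  rw [swapIndex, show n + i * m - m = n + (i - 1) * m by omega, Nat.succ_mul, Nat.add_assoc]

theorem ne_block_boundaries {n m r i j : ℕ} (hi1 : 1 ≤ i) (hi2 : i + 1 ≤ r)
    (hjN : j < n + m * r) (hj : ¬∃ t, t < r ∧ j = n + t * m) :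
    j ≠ n + i * m - m ∧ j ≠ n + i * m ∧ j ≠ n + i * m + m := by
  have hi' := sub_one_mul_add_self hi1 m
  refine ⟨fun h => hj ⟨i - 1, by omega, by omega⟩, fun h => hj ⟨i, by omega, h⟩,
    fun h => ?_⟩
  rcases Nat.lt_or_ge (i + 1) r with hr | hr
  · exact hj ⟨i + 1, hr, by rw [Nat.succ_mul]; omega⟩
  · have : (i + 1) * m = m * r := by rw [Nat.mul_comm m, show r = i + 1 by omega]
    rw [Nat.succ_mul] at this
    omega

theorem statement_11_general
    (n m r : ℕ) (hn : 1 ≤ n)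
    (i : ℕ) (hi1 : 1 ≤ i) (hi2 : i + 1 ≤ r)
    (N : ℕ) (hN : N = n + m * r)
    (A : Type*) [Ring A] [Algebra ℂ A]
    (X T : ℕ → A)
    -- defining relations of the cyclotomic Hecke algebra `H(Γ_N) = H_ζ(N,ℓ)`
    (hTX : ∀ c j, 1 ≤ c → c + 1 ≤ N → 1 ≤ j → j ≤ N → j ≠ c → j ≠ c + 1 →
      T c * X j = X j * T c)
    (hTT : ∀ c d, 1 ≤ c → c + 1 ≤ N → 1 ≤ d → d + 1 ≤ N → c + 1 < d →
      T c * T d = T d * T c)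
    (hbraid : ∀ c, 1 ≤ c → c + 2 ≤ N →
      T c * T (c + 1) * T c = T (c + 1) * T c * T (c + 1))
    -- `T_0` denotes (the image of) `X_1`
    (T0 : ℕ → A) (hT0 : ∀ j, T0 j = if j = 0 then X 1 else T j)
    -- `σ_i`
    (σ : ℕ → ℕ)
    (hσ : ∀ j, σ j =
      if n + (i - 1) * m < j ∧ j < n + i * m then j + m
      else if n + i * m < j ∧ j < n + (i + 1) * m then j - m
      else j)
    -- `K_l` and `T_{τ_i} = K_0 K_1 ⋯ K_{m-2} K_{m-1} K_{m-2} ⋯ K_1 K_0`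
    (K : ℕ → A) (hK : ∀ l, K l = seqProd T (n + i * m - l) 2 (l + 1))
    (Ttau : A)
    (hTtau : Ttau = ((List.range m).map K).prod *
      ((List.range (m - 1)).reverse.map K).prod)
    -- the parabolic subalgebra `H(Γ_{n,(m^r)})`, generated by `{T_j : j ∈ I}` where
    -- `I = {0, 1, …, n+mr-1} ∖ {n, n+m, …, n+(r-1)m}`
    (S : Subalgebra ℂ A)
    (hS : S = Algebra.adjoin ℂ
      {a | ∃ j, j + 1 ≤ N ∧ (¬∃ t, t < r ∧ j = n + t * m) ∧ a = T0 j}) :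
    -- `T_{τ_i}·T_j = T_{σ_i(j)}·T_{τ_i}` for every `j ∈ I`
    (∀ j, j + 1 ≤ N → (¬∃ t, t < r ∧ j = n + t * m) →
      Ttau * T0 j = T0 (σ j) * Ttau) ∧
    -- consequently `T_{τ_i}` normalizes `H(Γ_{n,(m^r)})`:
    -- `T_{τ_i} · H(Γ_{n,(m^r)}) = H(Γ_{n,(m^r)}) · T_{τ_i}`
    ((fun h => Ttau * h) '' (S : Set A) = (fun h => h * Ttau) '' (S : Set A)) := by
  have hmc : m + 1 ≤ n + i * m := by have := Nat.le_mul_of_pos_left m hi1; omega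
  have hcN : n + i * m + m ≤ N := by
    have := Nat.mul_le_mul_right m hi2; rw [Nat.succ_mul, Nat.mul_comm r] at this; omega
  have hT : BraidRelationsOn T 1 (N - 1) :=
    ⟨fun x y hx hxy hy => hTT x y hx (by omega) (by omega) (by omega) (by omega),
      fun x hx hx' => hbraid x hx (by omega)⟩
  have hTtau' : Ttau = gridRows T (n + i * m) m m := by
    rw [hTtau, show K = gridAntidiagonal T (n + i * m) from funext hK]
    exact hT.farCommute.prod_gridAntidiagonal_eq_gridRows (by omega) (by omega)
  have hσ' : σ = swapIndex (n + i * m) m :=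
    funext fun j => (hσ j).trans (swapIndex_add_mul hi1 j).symm
  have hrel : ∀ j, j + 1 ≤ N → (¬∃ t, t < r ∧ j = n + t * m) →
      Ttau * T0 j = T0 (σ j) * Ttau := by
    intro j hjN hj
    rw [hTtau', hσ', hT0, hT0]
    rcases Nat.eq_zero_or_pos j with rfl | hj0
    · rw [show swapIndex (n + i * m) m 0 = 0 by simp [swapIndex], if_pos rfl]
      exact (commute_gridRows fun y _ _ => (hTX y 1 (by omega) (by omega) le_rfl (by omega)
        (by omega) (by omega)).symm).eq.symm
    · have hb := ne_block_boundaries hi1 hi2 (by omega) hj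
      rw [if_neg (by omega), if_neg (by unfold swapIndex; split_ifs <;> omega)]
      exact hT.gridRows_mul_eq_mul_gridRows (by omega) (by omega) hj0 (by omega) hb
  refine ⟨hrel, hS ▸ Algebra.image_mul_left_adjoin_eq_image_mul_right ?_ ?_⟩
  all_goals
    rintro _ ⟨j, hjN, hj, rfl⟩
    obtain ⟨hσN, hσj⟩ := hN ▸ hσ' ▸ swapIndex_mem hi1 hi2 (by omega) hj
    refine ⟨T0 (σ j), ⟨σ j, hσN, hσj, rfl⟩, ?_⟩
  · exact hrel j hjN hj
  · rw [hrel _ hσN hσj, hσ', swapIndex_swapIndex (by omega)]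

theorem statement_11
    (n m r ℓ : ℕ) (hn : 1 ≤ n) (hm : 1 ≤ m) (hr : 2 ≤ r) (hℓ : 1 ≤ ℓ)
    (i : ℕ) (hi1 : 1 ≤ i) (hi2 : i + 1 ≤ r)
    (N : ℕ) (hN : N = n + m * r)
    (ζ : ℂ) (hζ : ζ ≠ 0) (v : ℕ → ℂ) (hv : ∀ p, 1 ≤ p → p ≤ ℓ → v p ≠ 0)
    (A : Type*) [Ring A] [Algebra ℂ A]
    (X T : ℕ → A)
    -- defining relations of the cyclotomic Hecke algebra `H(Γ_N) = H_ζ(N,ℓ)`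
    (hXunit : ∀ j, 1 ≤ j → j ≤ N → IsUnit (X j))
    (hXX : ∀ j k, 1 ≤ j → j ≤ N → 1 ≤ k → k ≤ N → X j * X k = X k * X j)
    (hTX : ∀ c j, 1 ≤ c → c + 1 ≤ N → 1 ≤ j → j ≤ N → j ≠ c → j ≠ c + 1 →
      T c * X j = X j * T c)
    (hTXT : ∀ c, 1 ≤ c → c + 1 ≤ N → T c * X c * T c = ζ • X (c + 1))
    (hquad : ∀ c, 1 ≤ c → c + 1 ≤ N → (T c + 1) * (T c - ζ • (1 : A)) = 0)
    (hTT : ∀ c d, 1 ≤ c → c + 1 ≤ N → 1 ≤ d → d + 1 ≤ N → c + 1 < d →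
      T c * T d = T d * T c)
    (hbraid : ∀ c, 1 ≤ c → c + 2 ≤ N →
      T c * T (c + 1) * T c = T (c + 1) * T c * T (c + 1))
    (hcyclo : ((List.range ℓ).map fun p => X 1 - algebraMap ℂ A (v (p + 1))).prod = 0)
    -- `T_0` denotes (the image of) `X_1`
    (T0 : ℕ → A) (hT0 : ∀ j, T0 j = if j = 0 then X 1 else T j)
    -- `σ_i`
    (σ : ℕ → ℕ)
    (hσ : ∀ j, σ j =
      if n + (i - 1) * m < j ∧ j < n + i * m then j + m
      else if n + i * m < j ∧ j < n + (i + 1) * m then j - m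
      else j)
    -- `K_l` and `T_{τ_i} = K_0 K_1 ⋯ K_{m-2} K_{m-1} K_{m-2} ⋯ K_1 K_0`
    (K : ℕ → A) (hK : ∀ l, K l = seqProd T (n + i * m - l) 2 (l + 1))
    (Ttau : A)
    (hTtau : Ttau = ((List.range m).map K).prod *
      ((List.range (m - 1)).reverse.map K).prod)
    -- the parabolic subalgebra `H(Γ_{n,(m^r)})`, generated by `{T_j : j ∈ I}` where
    -- `I = {0, 1, …, n+mr-1} ∖ {n, n+m, …, n+(r-1)m}`
    (S : Subalgebra ℂ A)
    (hS : S = Algebra.adjoin ℂ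
      {a | ∃ j, j + 1 ≤ N ∧ (¬∃ t, t < r ∧ j = n + t * m) ∧ a = T0 j}) :
    -- `T_{τ_i}·T_j = T_{σ_i(j)}·T_{τ_i}` for every `j ∈ I`
    (∀ j, j + 1 ≤ N → (¬∃ t, t < r ∧ j = n + t * m) →
      Ttau * T0 j = T0 (σ j) * Ttau) ∧
    -- consequently `T_{τ_i}` normalizes `H(Γ_{n,(m^r)})`:
    -- `T_{τ_i} · H(Γ_{n,(m^r)}) = H(Γ_{n,(m^r)}) · T_{τ_i}`
    ((fun h => Ttau * h) '' (S : Set A) = (fun h => h * Ttau) '' (S : Set A)) :=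
  statement_11_general n m r hn i hi1 hi2 N hN A X T hTX hTT hbraid T0 hT0 σ hσ K hK Ttau hTtau S hS
end

section
/- Fix integers ℓ ≥ 1 and k ≥ 1, and let λ be a partition with at most kℓ parts. For 1 ≤ i ≤ kℓ write λ_i − i + 1 = (a_i − 1)ℓ + b_i with a_i ∈ ℤ and 1 ≤ b_i ≤ ℓ, and put a′_i = ⌊(i−1)/ℓ⌋. Then: (1) for each i, the number of cells in the i-th row of λ whose content is divisible by ℓ equals a_i + a′_i, and hence n_0(λ) = Σ_{i=1}^{kℓ}(a_i + a′_i); (2) if moreover for every p ∈ {1,…,ℓ} there exists an integer s_p ≥ −k such that the multiset {a_i : 1 ≤ i ≤ kℓ, b_i = p} equals {−k+1, −k+2, …, s_p} (this holds precisely when λ is an ℓ-core, and then automatically Σ_{p=1}^{ℓ} s_p = 0), then n_0(λ) = (1/2)·Σ_{p=1}^{ℓ} s_p². -/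
/-! The cells of row `i` with content divisible by `ℓ` are `(i, i + tℓ)` for the integers `t`
with `1 ≤ i + tℓ ≤ λ_i`, i.e. `-a'_i ≤ t ≤ a_i - 1`. For an `ℓ`-core, summing the `a_i` over the
fibres of `b` gives `Σ a_i = ½ Σ_p (s_p + k)(s_p - k + 1)`, and counting the fibres gives
`kℓ = Σ_p (s_p + k)`; with `Σ a'_i = ½ ℓk(k - 1)` all terms involving `k` cancel. -/

open Finset

theorem floor_intCast_mul_add_div {q r : ℤ} {ℓ : ℕ} (hr : 0 ≤ r) (hrℓ : r < ℓ) :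
    ⌊((q * ℓ + r : ℤ) : ℚ) / ℓ⌋ = q := by
  rw [Rat.floor_intCast_div_natCast]
  exact ((Int.ediv_emod_unique (by omega)).2 ⟨by ring, hr, hrℓ⟩).1

theorem card_filter_dvd_sub_Icc {ℓ i N : ℕ} {A B : ℤ} (hi : 1 ≤ i)
    (hAB : (N : ℤ) - i + 1 = (A - 1) * ℓ + B) (hB : 1 ≤ B) (hBℓ : B ≤ ℓ) :
    (((Icc 1 N).filter fun j : ℕ => (ℓ : ℤ) ∣ (j : ℤ) - i).card : ℤ) = A + ((i - 1) / ℓ : ℕ) := by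
  have hℓ : 0 < ℓ := by omega
  have hdm := Nat.div_add_mod' (i - 1) ℓ
  have hr := Nat.mod_lt (i - 1) hℓ
  set q := (i - 1) / ℓ
  set r := (i - 1) % ℓ
  have hi_eq : i = q * ℓ + r + 1 := by omega
  have htop : ⌊((N : ℚ) - i) / ℓ⌋ = A - 1 := by
    rw [← floor_intCast_mul_add_div (q := A - 1) (r := B - 1) (ℓ := ℓ) (by omega) (by omega)]
    congr 2
    push_cast
    linarith [(by exact_mod_cast hAB : (N : ℚ) - i + 1 = (A - 1) * ℓ + B)]
  have hbot : ⌊(((0 : ℕ) : ℚ) - i) / ℓ⌋ = -q - 1 := by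
    rw [← floor_intCast_mul_add_div (q := -q - 1) (r := ℓ - 1 - r) (ℓ := ℓ) (by omega) (by omega)]
    rw [hi_eq]
    push_cast
    ring_nf
  have hle : ⌊(((0 : ℕ) : ℚ) - i) / ℓ⌋ ≤ ⌊((N : ℚ) - i) / ℓ⌋ :=
    Int.floor_mono (by gcongr; simp)
  have hfilter : ((Icc 1 N).filter fun j : ℕ => (ℓ : ℤ) ∣ (j : ℤ) - i) =
      (Ioc 0 N).filter fun j => j ≡ i [MOD ℓ] := by
    ext j
    rw [mem_filter, mem_filter, mem_Icc, mem_Ioc, Nat.ModEq.comm, Nat.modEq_iff_dvd]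
    omega
  rw [hfilter, Nat.Ioc_filter_modEq_card _ _ hℓ, htop, hbot]
  rw [htop, hbot] at hle
  omega

theorem two_mul_sum_Icc_id {u v : ℤ} (h : u ≤ v + 1) :
    2 * ∑ m ∈ Icc u v, m = (v - u + 1) * (u + v) := by
  induction v, (by omega : u - 1 ≤ v) using Int.leInduction with
  | base => simp
  | succ v hv ih =>
    rw [← insert_Icc_right_eq_Icc_add_one (by omega), sum_insert (by simp), mul_add, ih (by omega)]
    ring

theorem two_mul_sum_range_mul_div (ℓ K : ℕ) :
    2 * ∑ i ∈ range (K * ℓ), ((i / ℓ : ℕ) : ℤ) = ℓ * K * (K - 1) := by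
  induction K with
  | zero => simp
  | succ K ih =>
    have hblock : ∀ r ∈ range ℓ, (((K * ℓ + r) / ℓ : ℕ) : ℤ) = K := fun r hr => by
      rw [mem_range] at hr
      rw [Nat.div_eq_of_lt_le (k := K) (by omega) (by rw [add_one_mul]; omega)]
    rw [Nat.succ_mul, sum_range_add, mul_add, ih, sum_congr rfl hblock, sum_const, card_range,
      nsmul_eq_mul]
    push_cast
    ring

theorem sum_Icc_one_sub_one_eq_sum_range {M : Type*} [AddCommMonoid M] (f : ℕ → M) (n : ℕ) :
    ∑ i ∈ Icc 1 n, f (i - 1) = ∑ i ∈ range n, f i := by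
  rw [← Ico_add_one_right_eq_Icc, sum_Ico_eq_sum_range]
  simp

section Fibers

variable {ι κ : Type*} [DecidableEq κ] {S : Finset ι} {T : Finset κ} {g : ι → κ}
  {a : ι → ℤ} {s : κ → ℤ} {k : ℤ}

theorem card_eq_sum_of_fibers_Icc (hg : ∀ i ∈ S, g i ∈ T) (hs : ∀ p ∈ T, -k ≤ s p)
    (hfib : ∀ p ∈ T, (S.filter (g · = p)).val.map a = (Icc (-k + 1) (s p)).val) :
    (S.card : ℤ) = ∑ p ∈ T, (s p + k) := by
  rw [card_eq_sum_card_fiberwise hg, Nat.cast_sum]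
  refine sum_congr rfl fun p hp => ?_
  have hcard := congrArg Multiset.card (hfib p hp)
  rw [Multiset.card_map] at hcard
  rw [card_def, hcard, ← card_def, Int.card_Icc, Int.toNat_of_nonneg (by linarith [hs p hp])]
  ring

theorem two_mul_sum_eq_of_fibers_Icc (hg : ∀ i ∈ S, g i ∈ T) (hs : ∀ p ∈ T, -k ≤ s p)
    (hfib : ∀ p ∈ T, (S.filter (g · = p)).val.map a = (Icc (-k + 1) (s p)).val) :
    2 * ∑ i ∈ S, a i = ∑ p ∈ T, (s p + k) * (s p - k + 1) := by
  rw [← sum_fiberwise_of_maps_to hg, mul_sum]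
  refine sum_congr rfl fun p hp => ?_
  rw [sum_eq_multiset_sum, hfib p hp, sum_val]
  exact (two_mul_sum_Icc_id (by linarith [hs p hp])).trans (by ring)

end Fibers

theorem two_mul_sum_add_div_eq_sum_sq {ℓ k : ℕ} {a b s : ℕ → ℤ}
    (hb : ∀ i ∈ Icc 1 (k * ℓ), 1 ≤ b i ∧ b i ≤ ℓ)
    (hs : ∀ p ∈ Icc 1 ℓ, -(k : ℤ) ≤ s p ∧
      ((Icc 1 (k * ℓ)).filter fun i => b i = p).val.map a = (Icc (-(k : ℤ) + 1) (s p)).val) :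
    2 * ∑ i ∈ Icc 1 (k * ℓ), (a i + ((i - 1) / ℓ : ℕ)) = ∑ p ∈ Icc 1 ℓ, s p ^ 2 := by
  have hg : ∀ i ∈ Icc 1 (k * ℓ), (b i).toNat ∈ Icc 1 ℓ := fun i hi => by
    have := hb i hi
    rw [mem_Icc]
    omega
  have hfib : ∀ p ∈ Icc 1 ℓ, ((Icc 1 (k * ℓ)).filter fun i => (b i).toNat = p).val.map a =
      (Icc (-(k : ℤ) + 1) (s p)).val := fun p hp => by
    rw [← (hs p hp).2]
    congr 2
    refine filter_congr fun i hi => ?_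
    have := hb i hi
    omega
  have hcard := card_eq_sum_of_fibers_Icc hg (fun p hp => (hs p hp).1) hfib
  have hdiv := two_mul_sum_range_mul_div ℓ k
  rw [Nat.card_Icc, Nat.add_sub_cancel] at hcard
  rw [← sum_Icc_one_sub_one_eq_sum_range (fun i => ((i / ℓ : ℕ) : ℤ))] at hdiv
  have hsq : ∀ p ∈ Icc 1 ℓ, (s p + k) * (s p - k + 1) = s p ^ 2 + (s p + k) - k ^ 2 :=
    fun p _ => by ring
  rw [sum_add_distrib, mul_add, two_mul_sum_eq_of_fibers_Icc hg (fun p hp => (hs p hp).1) hfib,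
    hdiv, sum_congr rfl hsq, sum_sub_distrib, sum_add_distrib, ← hcard, sum_const, Nat.card_Icc,
    Nat.add_sub_cancel, nsmul_eq_mul]
  push_cast
  ring

theorem statement_13_general
    (ℓ k : ℕ)
    -- `lam` is a partition with at most `kℓ` parts (`lam i` is the `i`-th part, `1`-indexed)
    (lam : ℕ → ℕ)
    -- for `1 ≤ i ≤ kℓ`, write `λ_i - i + 1 = (a_i - 1)ℓ + b_i` with `1 ≤ b_i ≤ ℓ`
    (a b : ℕ → ℤ)
    (hab : ∀ i, 1 ≤ i → i ≤ k * ℓ →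
      (lam i : ℤ) - (i : ℤ) + 1 = (a i - 1) * (ℓ : ℤ) + b i ∧ 1 ≤ b i ∧ b i ≤ (ℓ : ℤ))
    -- `a'_i = ⌊(i-1)/ℓ⌋`
    (a' : ℕ → ℤ) (ha' : ∀ i, a' i = (((i - 1) / ℓ : ℕ) : ℤ)) :
    -- (1) the number of cells of content divisible by `ℓ` in the `i`-th row is `a_i + a'_i`,
    -- and hence `n_0(λ) = Σ_{i=1}^{kℓ} (a_i + a'_i)`
    ((∀ i, 1 ≤ i → i ≤ k * ℓ →
      ((((Finset.Icc 1 (lam i)).filter fun j : ℕ => (ℓ : ℤ) ∣ ((j : ℤ) - (i : ℤ))).card : ℤ)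
        = a i + a' i)) ∧
      ((∑ i ∈ Finset.Icc 1 (k * ℓ),
          (((Finset.Icc 1 (lam i)).filter fun j : ℕ => (ℓ : ℤ) ∣ ((j : ℤ) - (i : ℤ))).card) : ℤ)
        = ∑ i ∈ Finset.Icc 1 (k * ℓ), (a i + a' i))) ∧
    -- (2) if for each `p` the multiset `{a_i : b_i = p}` is `{-k+1, -k+2, …, s_p}`
    -- then `n_0(λ) = ½ Σ_{p=1}^{ℓ} s_p²`
    (∀ s : ℕ → ℤ,
      (∀ p : ℕ, 1 ≤ p → p ≤ ℓ →
        -(k : ℤ) ≤ s p ∧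
        ((Finset.Icc 1 (k * ℓ)).filter fun i => b i = (p : ℤ)).val.map a =
          (Finset.Icc (-(k : ℤ) + 1) (s p)).val) →
      ((∑ i ∈ Finset.Icc 1 (k * ℓ),
          (((Finset.Icc 1 (lam i)).filter fun j : ℕ => (ℓ : ℤ) ∣ ((j : ℤ) - (i : ℤ))).card) : ℚ)
        = (∑ p ∈ Finset.Icc 1 ℓ, ((s p : ℚ)) ^ 2) / 2)) := by
  have hrow : ∀ i, 1 ≤ i → i ≤ k * ℓ →
      ((((Icc 1 (lam i)).filter fun j : ℕ => (ℓ : ℤ) ∣ ((j : ℤ) - (i : ℤ))).card : ℤ)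
        = a i + a' i) := fun i hi hik => by
    obtain ⟨hA, hB, hBℓ⟩ := hab i hi hik
    rw [ha']
    exact card_filter_dvd_sub_Icc hi hA hB hBℓ
  have hsum : (∑ i ∈ Icc 1 (k * ℓ),
      (((Icc 1 (lam i)).filter fun j : ℕ => (ℓ : ℤ) ∣ ((j : ℤ) - (i : ℤ))).card : ℤ))
        = ∑ i ∈ Icc 1 (k * ℓ), (a i + a' i) :=
    sum_congr rfl fun i hi => hrow i (mem_Icc.1 hi).1 (mem_Icc.1 hi).2
  refine ⟨⟨hrow, hsum⟩, fun s hs => ?_⟩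
  have hcore := two_mul_sum_add_div_eq_sum_sq (a := a) (s := s)
    (fun i hi => (hab i (mem_Icc.1 hi).1 (mem_Icc.1 hi).2).2)
    (fun p hp => hs p (mem_Icc.1 hp).1 (mem_Icc.1 hp).2)
  simp_rw [← ha'] at hcore
  rw [← hsum] at hcore
  rw [eq_div_iff two_ne_zero, mul_comm]
  exact_mod_cast hcore

theorem statement_13
    (ℓ k : ℕ) (hℓ : 1 ≤ ℓ) (hk : 1 ≤ k)
    -- `lam` is a partition with at most `kℓ` parts (`lam i` is the `i`-th part, `1`-indexed)
    (lam : ℕ → ℕ)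
    (hmono : ∀ i j : ℕ, 1 ≤ i → i ≤ j → lam j ≤ lam i)
    (hsupp : ∀ i : ℕ, k * ℓ < i → lam i = 0)
    -- for `1 ≤ i ≤ kℓ`, write `λ_i - i + 1 = (a_i - 1)ℓ + b_i` with `1 ≤ b_i ≤ ℓ`
    (a b : ℕ → ℤ)
    (hab : ∀ i, 1 ≤ i → i ≤ k * ℓ →
      (lam i : ℤ) - (i : ℤ) + 1 = (a i - 1) * (ℓ : ℤ) + b i ∧ 1 ≤ b i ∧ b i ≤ (ℓ : ℤ))
    -- `a'_i = ⌊(i-1)/ℓ⌋`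
    (a' : ℕ → ℤ) (ha' : ∀ i, a' i = (((i - 1) / ℓ : ℕ) : ℤ)) :
    -- (1) the number of cells of content divisible by `ℓ` in the `i`-th row is `a_i + a'_i`,
    -- and hence `n_0(λ) = Σ_{i=1}^{kℓ} (a_i + a'_i)`
    ((∀ i, 1 ≤ i → i ≤ k * ℓ →
      ((((Finset.Icc 1 (lam i)).filter fun j : ℕ => (ℓ : ℤ) ∣ ((j : ℤ) - (i : ℤ))).card : ℤ)
        = a i + a' i)) ∧
      ((∑ i ∈ Finset.Icc 1 (k * ℓ),
          (((Finset.Icc 1 (lam i)).filter fun j : ℕ => (ℓ : ℤ) ∣ ((j : ℤ) - (i : ℤ))).card) : ℤ)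
        = ∑ i ∈ Finset.Icc 1 (k * ℓ), (a i + a' i))) ∧
    -- (2) if for each `p` the multiset `{a_i : b_i = p}` is `{-k+1, -k+2, …, s_p}`
    -- then `n_0(λ) = ½ Σ_{p=1}^{ℓ} s_p²`
    (∀ s : ℕ → ℤ,
      (∀ p : ℕ, 1 ≤ p → p ≤ ℓ →
        -(k : ℤ) ≤ s p ∧
        ((Finset.Icc 1 (k * ℓ)).filter fun i => b i = (p : ℤ)).val.map a =
          (Finset.Icc (-(k : ℤ) + 1) (s p)).val) →
      ((∑ i ∈ Finset.Icc 1 (k * ℓ),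
          (((Finset.Icc 1 (lam i)).filter fun j : ℕ => (ℓ : ℤ) ∣ ((j : ℤ) - (i : ℤ))).card) : ℚ)
        = (∑ p ∈ Finset.Icc 1 ℓ, ((s p : ℚ)) ^ 2) / 2)) :=
  statement_13_general ℓ k lam a b hab a' ha'
end

section
/- Let ℓ ≥ 1, let λ be a partition, and let λ^c be an ℓ-core of λ, i.e. a partition obtained from λ by successively removing rim hooks of length ℓ until no rim hook of length ℓ can be removed. Set w = (|λ| − |λ^c|)/ℓ. Then in the polynomial ring (ℤ/ℓℤ)[X] one has c_λ(X) = c_{λ^c}(X)·∏_{p=0}^{ℓ−1}(X+p)^{w}; equivalently, the multiset of residues mod ℓ of the contents of the cells of λ equals the corresponding multiset for λ^c together with w full copies of ℤ/ℓℤ. -/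
/- Statement 14: the content polynomial identity `c_λ(X) = c_{λ^c}(X)·∏_{p=0}^{ℓ-1}(X+p)^w`
in `(ℤ/ℓℤ)[X]`, where `λ^c` is an `ℓ`-core of `λ` and `w = (|λ| - |λ^c|)/ℓ`. -/

/-- Two cells are edgewise adjacent. -/
def CellAdj (c d : ℕ × ℕ) : Prop :=
  (c.1 = d.1 ∧ (c.2 + 1 = d.2 ∨ d.2 + 1 = c.2)) ∨
  (c.2 = d.2 ∧ (c.1 + 1 = d.1 ∨ d.1 + 1 = c.1))

/-- A finite set of cells is edgewise connected. -/
def EdgeConnected (S : Finset (ℕ × ℕ)) : Prop :=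
  ∀ c ∈ S, ∀ d ∈ S,
    Relation.ReflTransGen (fun x y => x ∈ S ∧ y ∈ S ∧ CellAdj x y) c d

/-- `ν` is obtained from `μ` by removing a rim hook of length `ℓ`: the skew diagram
`μ/ν` has `ℓ` cells, is edgewise connected, and contains no `2×2` block of cells. -/
def IsRimHookRemoval (ℓ : ℕ) (μ ν : YoungDiagram) : Prop :=
  ν ≤ μ ∧ (μ.cells \ ν.cells).card = ℓ ∧ EdgeConnected (μ.cells \ ν.cells) ∧
  ¬∃ i j : ℕ, (i, j) ∈ μ.cells \ ν.cells ∧ (i + 1, j) ∈ μ.cells \ ν.cells ∧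
    (i, j + 1) ∈ μ.cells \ ν.cells ∧ (i + 1, j + 1) ∈ μ.cells \ ν.cells

/-- `lamc` is an `ℓ`-core of `lam`: obtained from `lam` by successively removing rim
hooks of length `ℓ`, until no rim hook of length `ℓ` can be removed. -/
def IsLCore (ℓ : ℕ) (lam lamc : YoungDiagram) : Prop :=
  Relation.ReflTransGen (IsRimHookRemoval ℓ) lam lamc ∧
  ¬∃ ν : YoungDiagram, IsRimHookRemoval ℓ lamc ν

/-- The content polynomial `c_λ(X) = ∏_{(i,j) ∈ λ} (X + j - i)`, with coefficients
taken in `ℤ/ℓℤ` (cells are `0`-indexed, which does not change the contents `j - i`). -/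
noncomputable def contentPoly (ℓ : ℕ) (lam : YoungDiagram) : Polynomial (ZMod ℓ) :=
  ∏ c ∈ lam.cells, (Polynomial.X + Polynomial.C ((c.2 : ZMod ℓ) - (c.1 : ZMod ℓ)))

/-!
The contents of the cells of a rim hook of length `ℓ` are `ℓ` consecutive integers: adjacent
cells have contents differing by one, so by connectedness the contents fill an interval, and the
absence of a `2×2` block makes them pairwise distinct. Reduced mod `ℓ`, they therefore run once
through `ℤ/ℓℤ`, so removing a rim hook divides `c_λ` by `∏_{p<ℓ} (X + p)`. Iterating along the
removals from `λ` down to `λ^c` gives the theorem.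
-/

open Finset Polynomial

def cellContent (c : ℕ × ℕ) : ℤ := c.2 - c.1

lemma CellAdj.cellContent_eq {c d : ℕ × ℕ} (h : CellAdj c d) :
    cellContent d = cellContent c + 1 ∨ cellContent c = cellContent d + 1 := by
  unfold cellContent
  rcases h with ⟨_, _ | _⟩ | ⟨_, _ | _⟩ <;> omega

lemma Icc_cellContent_subset_image {S : Finset (ℕ × ℕ)} {c d : ℕ × ℕ} (hc : c ∈ S)
    (h : Relation.ReflTransGen (fun x y => x ∈ S ∧ y ∈ S ∧ CellAdj x y) c d) :
    Icc (cellContent c) (cellContent d) ⊆ S.image cellContent := by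
  induction h with
  | refl =>
    intro z hz
    rw [Icc_self, mem_singleton] at hz
    exact hz ▸ mem_image_of_mem _ hc
  | @tail b e _ hstep ih =>
    obtain ⟨-, he, hadj⟩ := hstep
    intro z hz
    rw [mem_Icc] at hz
    by_cases hze : z = cellContent e
    · exact hze ▸ mem_image_of_mem _ he
    · have := hadj.cellContent_eq
      exact ih (mem_Icc.2 (by omega))

lemma abs_cellContent_sub_lt_card {S : Finset (ℕ × ℕ)} (hS : EdgeConnected S)
    {c d : ℕ × ℕ} (hc : c ∈ S) (hd : d ∈ S) :
    |cellContent c - cellContent d| < S.card := by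
  have hspan {a b : ℕ × ℕ} (ha : a ∈ S) (hb : b ∈ S) :
      cellContent b + 1 - cellContent a ≤ S.card := by
    have := (card_le_card (Icc_cellContent_subset_image ha (hS a ha b hb))).trans
      card_image_le
    rw [Int.card_Icc] at this
    omega
  have := hspan hc hd
  have := hspan hd hc
  rw [abs_lt]
  constructor <;> omega

lemma cellContent_injOn_sdiff {μ ν : YoungDiagram}
    (h22 : ¬∃ i j : ℕ, (i, j) ∈ μ.cells \ ν.cells ∧ (i + 1, j) ∈ μ.cells \ ν.cells ∧
      (i, j + 1) ∈ μ.cells \ ν.cells ∧ (i + 1, j + 1) ∈ μ.cells \ ν.cells) :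
    Set.InjOn cellContent ↑(μ.cells \ ν.cells) := by
  -- Two distinct cells of equal content lie strictly north-west/south-east of each other,
  -- and the `2×2` block at the north-west one is then squeezed between them.
  suffices key : ∀ i j i' j', (i, j) ∈ μ.cells \ ν.cells → (i', j') ∈ μ.cells \ ν.cells →
      i < i' → j < j' → False by
    rintro ⟨i, j⟩ hc ⟨i', j'⟩ hd hcd
    simp only [cellContent] at hcd
    rcases lt_trichotomy i i' with h | h | h
    · exact (key i j i' j' hc hd h (by omega)).elim
    · simp only [Prod.mk.injEq]; omega
    · exact (key i' j' i j hd hc h (by omega)).elim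
  intro i j i' j' hc hd hi hj
  simp only [mem_sdiff, YoungDiagram.mem_cells] at hc hd
  have hmem : ∀ a b, i ≤ a → a ≤ i' → j ≤ b → b ≤ j' → (a, b) ∈ μ.cells \ ν.cells :=
    fun a b ha ha' hb hb' => mem_sdiff.2
      ⟨μ.up_left_mem ha' hb' hd.1, fun hν => hc.2 (ν.up_left_mem ha hb hν)⟩
  exact h22 ⟨i, j, hmem _ _ le_rfl hi.le le_rfl hj.le, hmem _ _ (by omega) hi le_rfl hj.le,
    hmem _ _ le_rfl hi.le (by omega) hj, hmem _ _ (by omega) hi (by omega) hj⟩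

lemma IsRimHookRemoval.intCast_cellContent_injOn {ℓ : ℕ} {μ ν : YoungDiagram}
    (h : IsRimHookRemoval ℓ μ ν) :
    Set.InjOn (fun c => (cellContent c : ZMod ℓ)) ↑(μ.cells \ ν.cells) := by
  obtain ⟨-, hcard, hconn, h22⟩ := h
  intro c hc d hd hcd
  have hlt := abs_cellContent_sub_lt_card hconn hc hd
  rw [hcard] at hlt
  rw [ZMod.intCast_eq_intCast_iff_dvd_sub] at hcd
  have := Int.eq_zero_of_abs_lt_dvd hcd (by rwa [abs_sub_comm])
  exact cellContent_injOn_sdiff h22 hc hd (by omega)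

lemma prod_comp_eq_prod_univ_of_injOn {α M : Type*} [CommMonoid M] {ℓ : ℕ} [NeZero ℓ]
    {s : Finset α} {g : α → ZMod ℓ} (hg : Set.InjOn g s) (hs : s.card = ℓ) (f : ZMod ℓ → M) :
    ∏ x ∈ s, f (g x) = ∏ z, f z := by
  rw [← prod_image hg, eq_univ_of_card (s.image g) (by rw [card_image_of_injOn hg, hs, ZMod.card])]

lemma prod_comp_eq_prod_range_of_injOn {α M : Type*} [CommMonoid M] {ℓ : ℕ} {s : Finset α}
    {g : α → ZMod ℓ} (hg : Set.InjOn g s) (hs : s.card = ℓ) (f : ZMod ℓ → M) :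
    ∏ x ∈ s, f (g x) = ∏ p ∈ range ℓ, f p := by
  rcases ℓ.eq_zero_or_pos with rfl | hℓ
  · rw [card_eq_zero.1 hs, prod_empty, range_zero, prod_empty]
  have : NeZero ℓ := ⟨hℓ.ne'⟩
  have hcast : Set.InjOn (Nat.cast : ℕ → ZMod ℓ) ↑(range ℓ) := fun a ha b hb hab => by
    rw [coe_range, Set.mem_Iio] at ha hb
    rwa [ZMod.natCast_eq_natCast_iff', Nat.mod_eq_of_lt ha, Nat.mod_eq_of_lt hb] at hab
  rw [prod_comp_eq_prod_univ_of_injOn hg hs, prod_comp_eq_prod_univ_of_injOn hcast (card_range ℓ)]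

lemma IsRimHookRemoval.card_eq {ℓ : ℕ} {μ ν : YoungDiagram} (h : IsRimHookRemoval ℓ μ ν) :
    μ.card = ν.card + ℓ := by
  rw [← h.2.1, add_comm]
  exact (card_sdiff_add_card_eq_card h.1).symm

lemma IsRimHookRemoval.contentPoly_eq {ℓ : ℕ} {μ ν : YoungDiagram}
    (h : IsRimHookRemoval ℓ μ ν) :
    contentPoly ℓ μ = contentPoly ℓ ν * ∏ p ∈ range ℓ, (X + C (p : ZMod ℓ)) := by
  have hfactor (c : ℕ × ℕ) :
      X + C ((c.2 : ZMod ℓ) - (c.1 : ZMod ℓ)) = X + C ((cellContent c : ℤ) : ZMod ℓ) := by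
    simp [cellContent]
  rw [contentPoly, contentPoly, ← prod_sdiff h.1, mul_comm]
  simp only [hfactor]
  rw [prod_comp_eq_prod_range_of_injOn h.intCast_cellContent_injOn h.2.1 (fun z => X + C z)]

lemma exists_card_eq_and_contentPoly_eq {ℓ : ℕ} {lam lamc : YoungDiagram}
    (h : Relation.ReflTransGen (IsRimHookRemoval ℓ) lam lamc) :
    ∃ k : ℕ, lam.card = lamc.card + k * ℓ ∧
      contentPoly ℓ lam = contentPoly ℓ lamc * (∏ p ∈ range ℓ, (X + C (p : ZMod ℓ))) ^ k := by
  induction h with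
  | refl => exact ⟨0, by simp⟩
  | tail _ hstep ih =>
    obtain ⟨k, hcard, hpoly⟩ := ih
    refine ⟨k + 1, by rw [hcard, hstep.card_eq]; ring, ?_⟩
    rw [hpoly, hstep.contentPoly_eq]
    ring

theorem statement_14_general (ℓ : ℕ) (lam lamc : YoungDiagram)
    (hcore : IsLCore ℓ lam lamc) :
    contentPoly ℓ lam =
      contentPoly ℓ lamc *
        ∏ p ∈ Finset.range ℓ,
          (Polynomial.X + Polynomial.C ((p : ZMod ℓ))) ^ ((lam.card - lamc.card) / ℓ) := by
  obtain ⟨k, hcard, hpoly⟩ := exists_card_eq_and_contentPoly_eq hcore.1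
  rw [hcard, Nat.add_sub_cancel_left, prod_pow, hpoly]
  rcases ℓ.eq_zero_or_pos with rfl | hℓ
  · simp
  · rw [Nat.mul_div_cancel k hℓ]

theorem statement_14 (ℓ : ℕ) (hℓ : 1 ≤ ℓ) (lam lamc : YoungDiagram)
    (hcore : IsLCore ℓ lam lamc) :
    contentPoly ℓ lam =
      contentPoly ℓ lamc *
        ∏ p ∈ Finset.range ℓ,
          (Polynomial.X + Polynomial.C ((p : ZMod ℓ))) ^ ((lam.card - lamc.card) / ℓ) :=
  statement_14_general ℓ lam lamc hcore
end

section
/- Let s = (s_1,…,s_ℓ) ∈ ℤ^ℓ with s_1 + s_2 + ⋯ + s_ℓ = 0, and set γ = Σ_{p=1}^{ℓ−1}(s_{p+1} − s_p)·(ω_p − ω_0) ∈ V. Then ⟨γ, γ⟩ = Σ_{p=1}^{ℓ} s_p². -/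
/-!
The form is the Gram form of the fundamental weights of `𝔰𝔩_ℓ`: for `ε_1, …, ε_ℓ` orthonormal,
`ω_p = ε_1 + ⋯ + ε_p - (p/ℓ)(ε_1 + ⋯ + ε_ℓ)` satisfies `⟨ω_p, ω_q⟩ = min(p,q) - pq/ℓ`, and `ω_0 = 0`.
Hence `⟨γ, γ⟩ = Σ_k c_k²` with `c_k` the `ε_k`-coordinate of `γ`. Summation by parts, using that
the coordinates of `ω_p` vanish at `p = 0` and `p = ℓ` and that `Σ s_p = 0`, gives `c_k = -s_k`.
-/

open Finset

theorem sum_Icc_one_eq_sum_range {M : Type*} [AddCommMonoid M] (f : ℕ → M) (n : ℕ) :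
    ∑ p ∈ Icc 1 n, f p = ∑ p ∈ range n, f (p + 1) := by
  induction n with
  | zero => simp
  | succ n ih => rw [sum_Icc_succ_top (by omega), ih, sum_range_succ]

theorem sum_range_sub_mul_eq {R : Type*} [CommRing R] (s f : ℕ → R) (n : ℕ) :
    ∑ p ∈ range n, (s (p + 1) - s p) * f p
      = s n * f n - s 0 * f 0 - ∑ p ∈ range n, s (p + 1) * (f (p + 1) - f p) := by
  induction n with
  | zero => simp
  | succ n ih => rw [sum_range_succ, sum_range_succ, ih]; ring

theorem LinearMap.apply_sum_smul_sum_smul_eq_sum_sq {R V ι κ : Type*} [CommRing R]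
    [AddCommGroup V] [Module R V] (B : V →ₗ[R] V →ₗ[R] R) (T : Finset ι) (K : Finset κ)
    (a : ι → R) (v : ι → V) (f : κ → ι → R)
    (hB : ∀ p ∈ T, ∀ q ∈ T, B (v p) (v q) = ∑ k ∈ K, f k p * f k q) :
    B (∑ p ∈ T, a p • v p) (∑ p ∈ T, a p • v p) = ∑ k ∈ K, (∑ p ∈ T, a p * f k p) ^ 2 := by
  simp only [map_sum, map_smul, LinearMap.sum_apply, LinearMap.smul_apply, smul_eq_mul, sq,
    sum_mul_sum]
  conv_rhs => rw [sum_comm]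
  refine sum_congr rfl fun q hq => ?_
  rw [sum_comm, mul_sum]
  refine sum_congr rfl fun p hp => ?_
  rw [hB p hp q hq, mul_sum, mul_sum]
  exact sum_congr rfl fun k _ => by ring

/-- The `ε_k`-coordinate of `ω_p`. -/
def weightCoord (ℓ k p : ℕ) : ℚ := (if k ≤ p then 1 else 0) - p / ℓ

theorem sum_Icc_ite_le {ℓ m : ℕ} (hm : m ≤ ℓ) :
    ∑ k ∈ Icc 1 ℓ, (if k ≤ m then (1 : ℚ) else 0) = m := by
  rw [sum_boole, show (Icc 1 ℓ).filter (· ≤ m) = Icc 1 m by ext; simp; omega]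
  simp

theorem sum_weightCoord_mul_weightCoord {ℓ p q : ℕ} (hℓ : ℓ ≠ 0) (hp : p ≤ ℓ) (hq : q ≤ ℓ) :
    ∑ k ∈ Icc 1 ℓ, weightCoord ℓ k p * weightCoord ℓ k q
      = ((min p q : ℕ) : ℚ) - p * q / ℓ := by
  have hmin : ∀ k : ℕ, (if k ≤ p then (1 : ℚ) else 0) * (if k ≤ q then 1 else 0)
      = if k ≤ min p q then 1 else 0 := by
    intro k; by_cases hkp : k ≤ p <;> by_cases hkq : k ≤ q <;> simp [hkp, hkq]
  have hexp : ∀ k : ℕ, weightCoord ℓ k p * weightCoord ℓ k q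
      = (if k ≤ min p q then 1 else 0) - q / ℓ * (if k ≤ p then 1 else 0)
          - p / ℓ * (if k ≤ q then 1 else 0) + p * q / ℓ ^ 2 := by
    intro k; rw [weightCoord, weightCoord, ← hmin]; ring
  simp only [hexp, sum_add_distrib, sum_sub_distrib, ← mul_sum, sum_const, Nat.card_Icc,
    sum_Icc_ite_le hp, sum_Icc_ite_le hq, sum_Icc_ite_le (min_le_of_left_le hp), nsmul_eq_mul]
  field_simp
  push_cast
  ring

theorem weightCoord_succ_sub (ℓ k p : ℕ) :
    weightCoord ℓ k (p + 1) - weightCoord ℓ k p = (if k = p + 1 then 1 else 0) - 1 / ℓ := by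
  unfold weightCoord
  by_cases h : k = p + 1
  · subst h; simp; ring
  · simp [h, show (k ≤ p + 1 ↔ k ≤ p) by omega]; ring

theorem sum_range_sub_mul_weightCoord {ℓ k : ℕ} (s : ℕ → ℚ) (hℓ : ℓ ≠ 0) (hk : k ∈ Icc 1 ℓ)
    (hs : ∑ p ∈ Icc 1 ℓ, s p = 0) :
    ∑ p ∈ range ℓ, (s (p + 1) - s p) * weightCoord ℓ k p = -s k := by
  obtain ⟨hk1, hkℓ⟩ := mem_Icc.1 hk
  have h0 : weightCoord ℓ k 0 = 0 := by simp [weightCoord, show ¬k ≤ 0 by omega]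
  have hℓ' : weightCoord ℓ k ℓ = 0 := by simp [weightCoord, hkℓ, hℓ]
  rw [sum_range_sub_mul_eq, h0, hℓ']
  simp only [weightCoord_succ_sub,
    ← sum_Icc_one_eq_sum_range (fun p => s p * ((if k = p then 1 else 0) - 1 / ℓ))]
  simp only [mul_sub, sum_sub_distrib, mul_ite, mul_one, mul_zero, sum_ite_eq, if_pos hk,
    ← sum_mul, hs]
  ring

theorem statement_15
    (ℓ : ℕ) (hℓ : 2 ≤ ℓ)
    (s : ℕ → ℤ) (hs : ∑ p ∈ Finset.Icc 1 ℓ, s p = 0)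
    (V : Type*) [AddCommGroup V] [Module ℚ V]
    -- the bilinear form determined by `⟨ω_p, ω_q⟩ = min(p,q) - pq/ℓ` on the basis
    (B : V →ₗ[ℚ] V →ₗ[ℚ] ℚ) (ω : Fin ℓ → V)
    (hB : ∀ p q : Fin ℓ, B (ω p) (ω q) =
      ((min (p : ℕ) (q : ℕ) : ℕ) : ℚ) - ((p : ℕ) : ℚ) * ((q : ℕ) : ℚ) / (ℓ : ℚ))
    -- `ωn` is `ω` reindexed by natural numbers `< ℓ`
    (ωn : ℕ → V) (hωn : ∀ p : ℕ, ∀ hp : p < ℓ, ωn p = ω ⟨p, hp⟩)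
    -- `γ = Σ_{p=1}^{ℓ-1} (s_{p+1} - s_p) • (ω_p - ω_0)`
    (γ : V)
    (hγ : γ = ∑ p ∈ Finset.Icc 1 (ℓ - 1), (((s (p + 1) - s p : ℤ)) : ℚ) • (ωn p - ωn 0)) :
    B γ γ = ∑ p ∈ Finset.Icc 1 ℓ, ((s p : ℚ)) ^ 2 := by
  have hℓ0 : ℓ ≠ 0 := by omega
  have hγ' : γ = ∑ p ∈ range ℓ, ((s (p + 1) : ℚ) - s p) • (ωn p - ωn 0) := by
    obtain ⟨m, rfl⟩ : ∃ m, ℓ = m + 1 := ⟨ℓ - 1, by omega⟩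
    rw [hγ, Nat.add_sub_cancel, sum_Icc_one_eq_sum_range, sum_range_succ' _ m]
    simp
  have hω : ∀ p ∈ range ℓ, ∀ q ∈ range ℓ, B (ωn p - ωn 0) (ωn q - ωn 0)
      = ∑ k ∈ Icc 1 ℓ, weightCoord ℓ k p * weightCoord ℓ k q := by
    intro p hp q hq
    rw [mem_range] at hp hq
    rw [sum_weightCoord_mul_weightCoord hℓ0 hp.le hq.le, hωn p hp, hωn q hq, hωn 0 (by omega)]
    simp [hB]
  rw [hγ', LinearMap.apply_sum_smul_sum_smul_eq_sum_sq B _ _ _ _ _ hω]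
  refine sum_congr rfl fun k hk => ?_
  rw [sum_range_sub_mul_weightCoord (fun p => (s p : ℚ)) hℓ0 hk (by exact_mod_cast hs)]
  ring
end
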